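/- arXiv:1005.2216 — 5 statements merged into one kernel-verified Lean document; each statement's English description precedes it below -/
import Mathlib

section
/- A partial permutation π with k holes avoids the monotone pattern 12⋯ℓ if and only if the permutation π′ obtained from π by deleting all holes avoids the pattern 12⋯(ℓ−k). Consequently, the number of partial permutations of length n with k holes avoiding 12⋯ℓ equals binomial(n,k) times the number of permutations of length n−k avoiding 12⋯(ℓ−k). -/
open Finset

/-- The word `σ` contains the pattern `p`: there is a subsequence of `σ`
order-isomorphic to `p`. -/
def ContainsPat {n ℓ : ℕ} {α β : Type*} [LinearOrder α] [LinearOrder β]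
    (σ : Fin n → α) (p : Fin ℓ → β) : Prop :=
  ∃ g : Fin ℓ → Fin n, StrictMono g ∧ ∀ a b : Fin ℓ, σ (g a) < σ (g b) ↔ p a < p b

/-- `σ ∈ S_n` is an extension of the partial permutation `π`: on the non-hole
positions, the relative order of the values of `σ` matches that of `π`. -/
def IsExtension {n : ℕ} {α : Type*} [LinearOrder α]
    (σ : Equiv.Perm (Fin n)) (π : Fin n → Option α) : Prop :=
  ∀ i j : Fin n, ∀ vi vj : α, π i = some vi → π j = some vj → (σ i < σ j ↔ vi < vj)

/-- The partial permutation `π` avoids the pattern `p`: every extension avoids `p`. -/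
def PPAvoids {n ℓ : ℕ} {α β : Type*} [LinearOrder α] [LinearOrder β]
    (π : Fin n → Option α) (p : Fin ℓ → β) : Prop :=
  ∀ σ : Equiv.Perm (Fin n), IsExtension σ π → ¬ ContainsPat (⇑σ) p

/-- `π` is a partial permutation of length `n` with `k` holes: each value of
`{1,…,n-k}` appears exactly once and there are exactly `k` holes. -/
def IsPPerm {n : ℕ} (k : ℕ) (π : Fin n → Option (Fin (n - k))) : Prop :=
  (Finset.univ.filter fun i => π i = none).card = k ∧
    ∀ v : Fin (n - k), ∃! i : Fin n, π i = some v

/-- `π` is a partial permutation whose holes are exactly at the positions in `H`. -/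
def IsPPermH {n : ℕ} (H : Finset (Fin n)) (π : Fin n → Option (Fin (n - H.card))) : Prop :=
  (∀ i, π i = none ↔ i ∈ H) ∧ ∀ v : Fin (n - H.card), ∃! i : Fin n, π i = some v

/-- `s_n^k(p)`: the number of `p`-avoiding partial permutations of length `n`
with `k` holes. -/
noncomputable def snk (n k : ℕ) {ℓ : ℕ} (p : Fin ℓ → Fin ℓ) : ℕ :=
  Nat.card {π : Fin n → Option (Fin (n - k)) // IsPPerm k π ∧ PPAvoids π p}

/-- `s_n^H(p)`: the number of `p`-avoiding partial permutations of length `n`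
with hole set `H`. -/
noncomputable def snH {n ℓ : ℕ} (H : Finset (Fin n)) (p : Fin ℓ → Fin ℓ) : ℕ :=
  Nat.card {π : Fin n → Option (Fin (n - H.card)) // IsPPermH H π ∧ PPAvoids π p}

/-- The number of permutations of length `m` avoiding the pattern `p`. -/
noncomputable def avoidCount (m : ℕ) {ℓ : ℕ} (p : Fin ℓ → Fin ℓ) : ℕ :=
  Nat.card {σ : Equiv.Perm (Fin m) // ¬ ContainsPat (⇑σ) p}

/-- `p` is a Baxter permutation: no indices `a < b < c = b+1 < d` such that
`(p a, p b, p c, p d)` is order-isomorphic to `2413` or `3142`. -/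
def IsBaxter {ℓ : ℕ} (p : Fin ℓ → Fin ℓ) : Prop :=
  ¬ ∃ a b c d : Fin ℓ, a < b ∧ (b : ℕ) + 1 = (c : ℕ) ∧ c < d ∧
    ((p c < p a ∧ p a < p d ∧ p d < p b) ∨ (p b < p d ∧ p d < p a ∧ p a < p c))


/-! Given an increasing subsequence of length `ℓ - k` among the non-hole entries, fill every hole
with a value just above the nearest chosen entry to its left: the holes and the chosen entries
then form an increasing subsequence of length `ℓ` of the extension. Conversely, at most `k`
entries of an occurrence of `12⋯ℓ` in an extension are holes, and the remaining ones are non-hole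
entries of `π` in increasing order. The count follows since a partial permutation is the same as
its set of holes together with the permutation obtained by deleting them. -/

def HasIncreasingSubseq {n : ℕ} {α : Type*} [LinearOrder α] (π : Fin n → Option α) (m : ℕ) :
    Prop :=
  ∃ (g : Fin m → Fin n) (v : Fin m → α), StrictMono g ∧ StrictMono v ∧ ∀ a, π (g a) = some (v a)

def holes {n : ℕ} {α : Type*} (π : Fin n → Option α) : Finset (Fin n) :=
  univ.filter fun i => π i = none

section Patterns

variable {n ℓ : ℕ} {α β : Type*} [LinearOrder α] [LinearOrder β]

theorem containsPat_iff_of_strictMono {σ : Fin n → α} {p : Fin ℓ → β} (hp : StrictMono p) :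
    ContainsPat σ p ↔ ∃ g : Fin ℓ → Fin n, StrictMono g ∧ StrictMono (σ ∘ g) := by
  simp only [ContainsPat, hp.lt_iff_lt]
  exact exists_congr fun g => and_congr_right fun _ =>
    ⟨fun h _ _ hab => (h _ _).2 hab, fun h _ _ => h.lt_iff_lt⟩

theorem containsPat_id_of_strictMonoOn {σ : Fin n → α} (s : Finset (Fin n)) (hs : ℓ ≤ #s)
    (hσ : StrictMonoOn σ s) : ContainsPat σ (id : Fin ℓ → Fin ℓ) :=
  (containsPat_iff_of_strictMono strictMono_id).2
    ⟨s.orderEmbOfCardLe hs, (s.orderEmbOfCardLe hs).strictMono, fun _ _ hab =>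
      hσ (s.orderEmbOfCardLe_mem hs _) (s.orderEmbOfCardLe_mem hs _)
        ((s.orderEmbOfCardLe hs).strictMono hab)⟩

theorem Equiv.Perm.exists_lt_iff_lt_of_injective {κ : Fin n → α} (hκ : Function.Injective κ) :
    ∃ σ : Equiv.Perm (Fin n), ∀ i j, σ i < σ j ↔ κ i < κ j := by
  have hsorted : StrictMono (κ ∘ Tuple.sort κ) :=
    (Tuple.monotone_sort κ).strictMono_of_injective (hκ.comp (Tuple.sort κ).injective)
  refine ⟨(Tuple.sort κ).symm, fun i j => ?_⟩
  rw [← hsorted.lt_iff_lt]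
  simp

theorem exists_orderEmbedding_forall_not {k : ℕ} (p : Fin ℓ → Prop) [DecidablePred p]
    (hp : #(univ.filter p) ≤ k) : ∃ e : Fin (ℓ - k) ↪o Fin ℓ, ∀ a, ¬ p (e a) := by
  have hcard : ℓ - k ≤ #(univ.filter fun a => ¬ p a) := by
    have := card_filter_add_card_filter_not (s := univ) p
    rw [card_univ, Fintype.card_fin] at this
    omega
  exact ⟨_, fun a => (mem_filter.1 (orderEmbOfCardLe_mem _ hcard a)).2⟩

end Patterns

section Extensions

variable {n m k ℓ : ℕ} {α : Type*} [LinearOrder α]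

theorem hasIncreasingSubseq_of_isExtension {π : Fin n → Option α} (hk : #(holes π) ≤ k)
    {σ : Equiv.Perm (Fin n)} (hσ : IsExtension σ π) (h : ContainsPat σ (id : Fin ℓ → Fin ℓ)) :
    HasIncreasingSubseq π (ℓ - k) := by
  obtain ⟨g, hg, hσg⟩ := (containsPat_iff_of_strictMono strictMono_id).1 h
  have hholes : #(univ.filter fun a => π (g a) = none) ≤ k :=
    (card_le_card_of_injOn g (fun a ha => by simpa [holes] using ha) hg.injective.injOn).trans hk
  obtain ⟨e, he⟩ := exists_orderEmbedding_forall_not _ hholes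
  choose v hv using fun a => Option.ne_none_iff_exists'.1 (he a)
  exact ⟨g ∘ e, v, hg.comp e.strictMono,
    fun a b hab => (hσ _ _ _ _ (hv a) (hv b)).1 (hσg (e.strictMono hab)), hv⟩

def leftMax (g : Fin m → Fin n) (v : Fin m → α) (i : Fin n) : WithBot α :=
  (univ.filter fun a => g a ≤ i).sup fun a => (v a : WithBot α)

theorem leftMax_mono (g : Fin m → Fin n) (v : Fin m → α) : Monotone (leftMax g v) :=
  fun _ _ hij => sup_mono fun a ha => mem_filter.2 ⟨mem_univ a, (mem_filter.1 ha).2.trans hij⟩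

theorem leftMax_apply {g : Fin m → Fin n} {v : Fin m → α} (hg : StrictMono g)
    (hv : StrictMono v) (b : Fin m) : leftMax g v (g b) = v b :=
  le_antisymm
    (Finset.sup_le fun _ ha =>
      WithBot.coe_le_coe.2 (hv.monotone (hg.le_iff_le.1 (mem_filter.1 ha).2)))
    (le_sup (f := fun a => (v a : WithBot α)) (mem_filter.2 ⟨mem_univ b, le_rfl⟩))

/-- Sorting key of an extension of `π` realising the increasing subsequence `(g, v)`. -/
def fillKey (π : Fin n → Option α) (g : Fin m → Fin n) (v : Fin m → α) (i : Fin n) :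
    WithBot α ×ₗ Fin n :=
  toLex ((π i).elim (leftMax g v i) (↑), i)

theorem fillKey_injective (π : Fin n → Option α) (g : Fin m → Fin n) (v : Fin m → α) :
    Function.Injective (fillKey π g v) :=
  fun _ _ h => congrArg (fun x => (ofLex x).2) h

theorem fillKey_strictMonoOn {π : Fin n → Option α} {g : Fin m → Fin n} {v : Fin m → α}
    (hg : StrictMono g) (hv : StrictMono v) (hgv : ∀ a, π (g a) = some (v a)) :
    StrictMonoOn (fillKey π g v) ↑(univ.image g ∪ holes π) := by
  have hkey : ∀ i ∈ univ.image g ∪ holes π, fillKey π g v i = toLex (leftMax g v i, i) := by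
    intro i hi
    rcases mem_union.1 hi with hi | hi
    · obtain ⟨b, -, rfl⟩ := mem_image.1 hi
      simp [fillKey, hgv, leftMax_apply hg hv]
    · simp [fillKey, (mem_filter.1 hi).2]
  intro i hi j hj hij
  rw [hkey i hi, hkey j hj]
  exact Prod.Lex.toLex_strictMono (Prod.mk_lt_mk_of_le_of_lt (leftMax_mono g v hij.le) hij)

theorem exists_isExtension_containsPat_id {π : Fin n → Option α}
    (hπ : ∀ i j a, π i = some a → π j = some a → i = j) (hk : k ≤ #(holes π))
    (h : HasIncreasingSubseq π (ℓ - k)) :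
    ∃ σ : Equiv.Perm (Fin n), IsExtension σ π ∧ ContainsPat σ (id : Fin ℓ → Fin ℓ) := by
  obtain ⟨g, v, hg, hv, hgv⟩ := h
  obtain ⟨σ, hσ⟩ := Equiv.Perm.exists_lt_iff_lt_of_injective (fillKey_injective π g v)
  refine ⟨σ, fun i j a b hi hj => ?_, ?_⟩
  · rw [hσ, fillKey, fillKey, hi, hj, Prod.Lex.toLex_lt_toLex]
    simp only [Option.elim_some, WithBot.coe_lt_coe, WithBot.coe_inj]
    exact ⟨fun h => h.resolve_right fun ⟨hab, hij⟩ => hij.ne (hπ i j a hi (hab ▸ hj)), Or.inl⟩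
  · have hdisj : Disjoint (univ.image g) (holes π) :=
      disjoint_left.2 fun i hi hi' => by
        obtain ⟨a, -, rfl⟩ := mem_image.1 hi
        simp [holes, hgv] at hi'
    have hcard : ℓ ≤ #(univ.image g ∪ holes π) := by
      rw [card_union_of_disjoint hdisj, card_image_of_injective _ hg.injective, card_univ,
        Fintype.card_fin]
      omega
    exact containsPat_id_of_strictMonoOn _ hcard fun i hi j hj hij =>
      (hσ i j).2 (fillKey_strictMonoOn hg hv hgv hi hj hij)

theorem IsPPerm.eq_of_apply_eq_some {π : Fin n → Option (Fin (n - k))} (hπ : IsPPerm k π)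
    {i j : Fin n} {a : Fin (n - k)} (hi : π i = some a) (hj : π j = some a) : i = j :=
  (hπ.2 a).unique hi hj

theorem IsPPerm.ppAvoids_id_iff {π : Fin n → Option (Fin (n - k))} (hπ : IsPPerm k π) :
    PPAvoids π (id : Fin ℓ → Fin ℓ) ↔ ¬ HasIncreasingSubseq π (ℓ - k) := by
  refine ⟨fun hav hinc => ?_, fun h σ hσ hc => h (hasIncreasingSubseq_of_isExtension hπ.1.le hσ hc)⟩
  obtain ⟨σ, hσ, hc⟩ := exists_isExtension_containsPat_id
    (fun _ _ _ => hπ.eq_of_apply_eq_some) hπ.1.ge hinc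
  exact hav σ hσ hc

end Extensions

section Spread

variable {n m : ℕ} {α : Type*}

noncomputable def spread (e : Fin m ↪o Fin n) (w : Fin m → α) : Fin n → Option α :=
  Function.extend e (some ∘ w) fun _ => none

variable (e : Fin m ↪o Fin n)

@[simp]
theorem spread_apply (w : Fin m → α) (j : Fin m) : spread e w (e j) = some (w j) :=
  e.injective.extend_apply _ _ _

theorem spread_eq_none_iff (w : Fin m → α) (i : Fin n) :
    spread e w i = none ↔ i ∉ Set.range e := by
  by_cases hi : i ∈ Set.range e
  · obtain ⟨j, rfl⟩ := hi
    simp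
  · simp [spread, Function.extend_apply' _ _ _ hi, hi]

theorem spread_eq_some_iff (w : Fin m → α) (i : Fin n) (a : α) :
    spread e w i = some a ↔ ∃ j, e j = i ∧ w j = a := by
  by_cases hi : i ∈ Set.range e
  · obtain ⟨j, rfl⟩ := hi
    simp [e.injective.eq_iff]
  · simp only [Set.mem_range, not_exists] at hi
    simp [spread, hi]

theorem spread_injective : Function.Injective (spread e : (Fin m → α) → Fin n → Option α) :=
  fun w w' h => funext fun j => Option.some_injective _ <| by rw [← spread_apply, h, spread_apply]

theorem exists_spread_eq {π : Fin n → Option α} (hπ : ∀ i, π i = none ↔ i ∉ Set.range e) :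
    ∃ w, spread e w = π := by
  choose w hw using fun j => Option.ne_none_iff_exists'.1 (mt (hπ (e j)).1 (not_not.2 ⟨j, rfl⟩))
  refine ⟨w, funext fun i => ?_⟩
  by_cases hi : i ∈ Set.range e
  · obtain ⟨j, rfl⟩ := hi
    rw [spread_apply, hw]
  · rw [(spread_eq_none_iff e w i).2 hi, (hπ i).2 hi]

theorem hasIncreasingSubseq_spread_iff [LinearOrder α] (w : Fin m → α) (l : ℕ) :
    HasIncreasingSubseq (spread e w) l ↔
      ∃ g : Fin l → Fin m, StrictMono g ∧ StrictMono (w ∘ g) := by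
  constructor
  · rintro ⟨G, V, hG, hV, hGV⟩
    choose g hg hgV using fun a => (spread_eq_some_iff e w _ _).1 (hGV a)
    refine ⟨g, fun a b hab => e.lt_iff_lt.1 ?_, fun a b hab => ?_⟩
    · rw [hg, hg]
      exact hG hab
    · simp only [Function.comp_apply, hgV]
      exact hV hab
  · rintro ⟨g, hg, hw⟩
    exact ⟨e ∘ g, w ∘ g, e.strictMono.comp hg, hw, fun a => spread_apply e w (g a)⟩

end Spread

section HoleSets

variable {n k ℓ : ℕ}

theorem card_compl_of_card_eq {H : Finset (Fin n)} (hH : #H = k) : #Hᶜ = n - k := by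
  rw [card_compl, Fintype.card_fin, hH]

noncomputable def fillHoles (H : Finset (Fin n)) (hH : #H = k) (τ : Equiv.Perm (Fin (n - k))) :
    Fin n → Option (Fin (n - k)) :=
  spread (Hᶜ.orderEmbOfFin (card_compl_of_card_eq hH)) τ

theorem holes_fillHoles (H : Finset (Fin n)) (hH : #H = k) (τ : Equiv.Perm (Fin (n - k))) :
    holes (fillHoles H hH τ) = H := by
  ext i
  simp [holes, fillHoles, spread_eq_none_iff]

theorem isPPerm_fillHoles (H : Finset (Fin n)) (hH : #H = k) (τ : Equiv.Perm (Fin (n - k))) :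
    IsPPerm k (fillHoles H hH τ) := by
  refine ⟨(congrArg card (holes_fillHoles H hH τ)).trans hH, fun a =>
    ⟨Hᶜ.orderEmbOfFin (card_compl_of_card_eq hH) (τ.symm a), ?_, fun i hi => ?_⟩⟩
  · simp [fillHoles]
  · obtain ⟨j, rfl, rfl⟩ := (spread_eq_some_iff _ _ _ _).1 hi
    rw [τ.symm_apply_apply]

theorem fillHoles_injective {H H' : Finset (Fin n)} {hH : #H = k} {hH' : #H' = k}
    {τ τ' : Equiv.Perm (Fin (n - k))} (h : fillHoles H hH τ = fillHoles H' hH' τ') :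
    H = H' ∧ τ = τ' := by
  obtain rfl : H = H' := by rw [← holes_fillHoles H hH τ, h, holes_fillHoles]
  exact ⟨rfl, DFunLike.coe_injective (spread_injective _ h)⟩

theorem IsPPerm.exists_fillHoles_eq {π : Fin n → Option (Fin (n - k))} (hπ : IsPPerm k π) :
    ∃ τ, fillHoles (holes π) hπ.1 τ = π := by
  set e := (holes π)ᶜ.orderEmbOfFin (card_compl_of_card_eq hπ.1)
  obtain ⟨w, hw⟩ := exists_spread_eq e (π := π) fun i => by simp [e, holes]
  have hval (j) : π (e j) = some (w j) := (congrFun hw (e j)).symm.trans (spread_apply e w j)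
  have hinj : Function.Injective w := fun j j' h =>
    e.injective (hπ.eq_of_apply_eq_some (hval j) (h ▸ hval j'))
  exact ⟨Equiv.ofBijective w (Finite.injective_iff_bijective.1 hinj), hw⟩

theorem ppAvoids_fillHoles_iff (H : Finset (Fin n)) (hH : #H = k)
    (τ : Equiv.Perm (Fin (n - k))) :
    PPAvoids (fillHoles H hH τ) (id : Fin ℓ → Fin ℓ) ↔
      ¬ ContainsPat τ (id : Fin (ℓ - k) → Fin (ℓ - k)) := by
  rw [(isPPerm_fillHoles H hH τ).ppAvoids_id_iff, fillHoles, hasIncreasingSubseq_spread_iff,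
    containsPat_iff_of_strictMono strictMono_id]

theorem snk_id_eq_card_prod (n k ℓ : ℕ) :
    snk n k (id : Fin ℓ → Fin ℓ) = Nat.card ({H : Finset (Fin n) // #H = k} ×
      {τ : Equiv.Perm (Fin (n - k)) // ¬ ContainsPat τ (id : Fin (ℓ - k) → Fin (ℓ - k))}) := by
  refine (Nat.card_eq_of_bijective (fun x => ⟨fillHoles x.1.1 x.1.2 x.2.1,
    isPPerm_fillHoles _ _ _, (ppAvoids_fillHoles_iff _ _ _).2 x.2.2⟩) ⟨?_, ?_⟩).symm
  · rintro ⟨⟨H, hH⟩, τ, hτ⟩ ⟨⟨H', hH'⟩, τ', hτ'⟩ h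
    obtain ⟨rfl, rfl⟩ := fillHoles_injective (hH := hH) (hH' := hH') (congrArg Subtype.val h)
    rfl
  · rintro ⟨π, hπ, hav⟩
    obtain ⟨τ, hτ⟩ := hπ.exists_fillHoles_eq
    exact ⟨⟨⟨_, hπ.1⟩, τ, (ppAvoids_fillHoles_iff _ _ τ).1 (hτ ▸ hav)⟩, Subtype.ext hτ⟩

end HoleSets

theorem monotone_pattern_avoidance_general (n k ℓ : ℕ) :
    (∀ π : Fin n → Option (Fin (n - k)), IsPPerm k π →
      (PPAvoids π (id : Fin ℓ → Fin ℓ) ↔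
        ¬ ∃ (g : Fin (ℓ - k) → Fin n) (v : Fin (ℓ - k) → Fin (n - k)),
            StrictMono g ∧ StrictMono v ∧ ∀ a, π (g a) = some (v a))) ∧
    snk n k (id : Fin ℓ → Fin ℓ)
      = n.choose k * avoidCount (n - k) (id : Fin (ℓ - k) → Fin (ℓ - k)) := by
  refine ⟨fun π hπ => hπ.ppAvoids_id_iff, ?_⟩
  rw [snk_id_eq_card_prod, Nat.card_prod, Nat.card_eq_fintype_card (α := {H : Finset (Fin n) // _}),
    Fintype.card_finset_len, Fintype.card_fin, avoidCount]

/-- A partial permutation with `k` holes avoids `12⋯ℓ` iff deleting all holes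
yields a `12⋯(ℓ-k)`-avoiding permutation; consequently
`s_n^k(12⋯ℓ) = C(n,k) · s_{n-k}^0(12⋯(ℓ-k))`. -/
theorem monotone_pattern_avoidance (n k ℓ : ℕ) (hkℓ : k < ℓ) (hkn : k ≤ n) :
    (∀ π : Fin n → Option (Fin (n - k)), IsPPerm k π →
      (PPAvoids π (id : Fin ℓ → Fin ℓ) ↔
        ¬ ∃ (g : Fin (ℓ - k) → Fin n) (v : Fin (ℓ - k) → Fin (n - k)),
            StrictMono g ∧ StrictMono v ∧ ∀ a, π (g a) = some (v a))) ∧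
    snk n k (id : Fin ℓ → Fin ℓ)
      = n.choose k * avoidCount (n - k) (id : Fin (ℓ - k) → Fin (ℓ - k)) :=
  monotone_pattern_avoidance_general n k ℓ
end

section
/- Let p be a permutation of length ℓ, let k = ℓ−2, and let π be a partial permutation of length n whose holes are at positions h₁ < ⋯ < h_k. Partition the non-hole positions into intervals I₁,…,I_{k+1} where I_a is the set of non-hole positions between h_{a−1} and h_a (with I₁ before h₁ and I_{k+1} after h_k). Then π avoids p if and only if for all non-hole positions i < j with i ∈ I_a and j ∈ I_b, the entries satisfy π_i < π_j ⟺ p_a > p_{b+1}. -/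
open Finset

/-!
If the condition fails for non-hole positions `i < j`, then `i`, `j` and the `k` holes carry an
occurrence of `p` in a suitable extension: the holes receive the values of the affine map that
sends `p_a ↦ π_i` and `p_{b+1} ↦ π_j`, evaluated at the pattern values. Conversely, an occurrence
of `p` in an extension uses at least two non-hole positions. Along the used non-hole positions,
the number of holes to the left minus the index in the pattern starts nonnegative, ends negative,
and drops by at most one at each step (all pattern entries in between are holes), so somewhere
it passes from `0` to `-1`; the condition for that pair contradicts the occurrence.
-/

namespace Finset

variable {α : Type*} [LinearOrder α]

theorem card_filter_lt_orderEmbOfFin (s : Finset α) {k : ℕ} (h : s.card = k) (t : Fin k) :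
    #{y ∈ s | y < s.orderEmbOfFin h t} = t := by
  have : {y ∈ s | y < s.orderEmbOfFin h t} = (Iio t).map (s.orderEmbOfFin h).toEmbedding := by
    ext y
    simp only [mem_filter, mem_map, mem_Iio, RelEmbedding.coe_toEmbedding]
    constructor
    · rintro ⟨hy, hlt⟩
      obtain ⟨u, rfl⟩ : y ∈ Set.range (s.orderEmbOfFin h) := by
        rwa [range_orderEmbOfFin]
      exact ⟨u, (s.orderEmbOfFin h).lt_iff_lt.mp hlt, rfl⟩
    · rintro ⟨u, hut, rfl⟩
      exact ⟨orderEmbOfFin_mem s h u, (s.orderEmbOfFin h).lt_iff_lt.mpr hut⟩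
  rw [this, card_map, Fin.card_Iio]

theorem coe_orderIsoOfFin_eq_of_card_filter_lt {s : Finset α} {k : ℕ} (h : s.card = k)
    {x : α} (hx : x ∈ s) {t : Fin k} (ht : #{y ∈ s | y < x} = t) :
    (s.orderIsoOfFin h t : α) = x := by
  obtain ⟨u, hu⟩ := (s.orderIsoOfFin h).surjective ⟨x, hx⟩
  have hxu : s.orderEmbOfFin h u = x := by rw [← coe_orderIsoOfFin_apply, hu]
  have : t = u := Fin.ext (by rw [← ht, ← hxu, card_filter_lt_orderEmbOfFin])
  rw [this, hu]

theorem card_filter_lt_add_card_le {H A : Finset α} {y : α} (hA : A ⊆ H)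
    (hy : ∀ a ∈ A, y ≤ a) : #{h ∈ H | h < y} + #A ≤ #H := by
  rw [← card_union_of_disjoint]
  · exact card_le_card (union_subset (filter_subset _ _) hA)
  · exact disjoint_left.mpr fun a ha haA => (mem_filter.mp ha).2.not_ge (hy a haA)

theorem exists_adjacent_of_not {N : Finset α} {P : α → Prop} [DecidablePred P] {a b : α}
    (ha : a ∈ N) (hb : b ∈ N) (hab : a ≤ b) (hPa : P a) (hPb : ¬ P b) :
    ∃ s ∈ N, ∃ t ∈ N, s < t ∧ P s ∧ ¬ P t ∧ ∀ u ∈ N, s < u → t ≤ u := by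
  have hT : {u ∈ N | a ≤ u ∧ ¬ P u}.Nonempty := ⟨b, mem_filter.mpr ⟨hb, hab, hPb⟩⟩
  set t := {u ∈ N | a ≤ u ∧ ¬ P u}.min' hT
  obtain ⟨htN, hat, hPt⟩ : t ∈ N ∧ a ≤ t ∧ ¬ P t := mem_filter.mp (min'_mem _ hT)
  have hat' : a < t := lt_of_le_of_ne hat fun h => hPt (h ▸ hPa)
  have hB : {u ∈ N | a ≤ u ∧ u < t}.Nonempty := ⟨a, mem_filter.mpr ⟨ha, le_rfl, hat'⟩⟩
  set s := {u ∈ N | a ≤ u ∧ u < t}.max' hB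
  obtain ⟨hsN, has, hst⟩ : s ∈ N ∧ a ≤ s ∧ s < t := mem_filter.mp (max'_mem _ hB)
  refine ⟨s, hsN, t, htN, hst, ?_, hPt, fun u huN hsu => ?_⟩
  · by_contra hPs
    exact hst.not_ge (min'_le _ _ (mem_filter.mpr ⟨hsN, has, hPs⟩))
  · by_contra hut
    exact hsu.not_ge (le_max' _ _ (mem_filter.mpr ⟨huN, has.trans hsu.le, not_le.mp hut⟩))

end Finset

theorem exists_pair_notMem_card_filter_lt_eq {α : Type*} [LinearOrder α] {H : Finset α} {ℓ : ℕ}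
    {g : Fin ℓ → α} (hg : StrictMono g) (hℓ : #H + 2 ≤ ℓ) :
    ∃ s t : Fin ℓ, s < t ∧ g s ∉ H ∧ g t ∉ H ∧
      #{h ∈ H | h < g s} = s ∧ #{h ∈ H | h < g t} + 1 = t := by
  classical
  set N : Finset (Fin ℓ) := {s | g s ∉ H}
  have hole_of_notMem : ∀ u, u ∉ N → g u ∈ H := by simp [N]
  have hN : N.Nonempty := by
    by_contra hN
    have := card_le_card_of_injOn g (s := univ) (t := H)
      (fun u _ => hole_of_notMem u fun hu => hN ⟨u, hu⟩) hg.injective.injOn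
    rw [card_univ, Fintype.card_fin] at this
    omega
  set a := N.min' hN
  set b := N.max' hN
  have hPa : (a : ℕ) ≤ #{h ∈ H | h < g a} := by
    rw [← Fin.card_Iio]
    refine card_le_card_of_injOn g (fun u hu => ?_) hg.injective.injOn
    have hua : u < a := mem_Iio.mp hu
    exact mem_filter.mpr ⟨hole_of_notMem u fun huN => hua.not_ge (min'_le N u huN), hg hua⟩
  have hPb : #{h ∈ H | h < g b} < b := by
    have := card_filter_lt_add_card_le (A := (Ioi b).image g) (y := g b)
      (fun x hx => by
        obtain ⟨u, hu, rfl⟩ := mem_image.mp hx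
        exact hole_of_notMem u fun huN => (mem_Ioi.mp hu).not_ge (le_max' N u huN))
      (fun x hx => by
        obtain ⟨u, hu, rfl⟩ := mem_image.mp hx
        exact (hg (mem_Ioi.mp hu)).le)
    rw [card_image_of_injective _ hg.injective, Fin.card_Ioi] at this
    omega
  obtain ⟨s, hs, t, ht, hst, hPs, hPt, hadj⟩ :=
    exists_adjacent_of_not (P := fun u : Fin ℓ => (u : ℕ) ≤ #{h ∈ H | h < g u})
      (min'_mem N hN) (max'_mem N hN) (min'_le_max' N hN) hPa (not_le.mpr hPb)
  have hbetween : #{h ∈ H | h < g s} + (t - s - 1) ≤ #{h ∈ H | h < g t} := by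
    have := card_filter_lt_add_card_le (H := {h ∈ H | h < g t}) (A := (Ioo s t).image g)
      (y := g s)
      (fun x hx => by
        obtain ⟨u, hu, rfl⟩ := mem_image.mp hx
        obtain ⟨hsu, hut⟩ := mem_Ioo.mp hu
        exact mem_filter.mpr ⟨hole_of_notMem u fun huN => hut.not_ge (hadj u huN hsu), hg hut⟩)
      (fun x hx => by
        obtain ⟨u, hu, rfl⟩ := mem_image.mp hx
        exact (hg (mem_Ioo.mp hu).1).le)
    rwa [filter_filter, card_image_of_injective _ hg.injective, Fin.card_Ioo,
      filter_congr fun h _ => and_iff_right_of_imp fun hh => hh.trans (hg hst)] at this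
  have hst' : (s : ℕ) < t := hst
  simp only [not_le] at hPs hPt
  exact ⟨s, t, hst, (mem_filter.mp hs).2, (mem_filter.mp ht).2, by omega, by omega⟩
theorem exists_perm_lt_iff_lt {β : Type*} [LinearOrder β] {n : ℕ} (f : Fin n → β)
    (hf : Function.Injective f) : ∃ σ : Equiv.Perm (Fin n), ∀ x y, σ x < σ y ↔ f x < f y := by
  refine ⟨(Tuple.sort f).symm, fun x y => ?_⟩
  have hmono : StrictMono (f ∘ Tuple.sort f) :=
    (Tuple.monotone_sort f).strictMono_of_injective (hf.comp (Tuple.sort f).injective)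
  conv_rhs => rw [← (Tuple.sort f).apply_symm_apply x, ← (Tuple.sort f).apply_symm_apply y]
  exact hmono.lt_iff_lt.symm

theorem exists_strictMono_map_eq {K : Type*} [Field K] [LinearOrder K] [IsStrictOrderedRing K]
    {x₁ x₂ y₁ y₂ : K} (hx : x₁ ≠ x₂) (hy : y₁ ≠ y₂) (hxy : x₁ < x₂ ↔ y₁ < y₂) :
    ∃ L : K → K, StrictMono L ∧ L x₁ = y₁ ∧ L x₂ = y₂ := by
  have hslope : 0 < (y₂ - y₁) / (x₂ - x₁) := by
    rcases hx.lt_or_gt with h | h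
    · exact div_pos (sub_pos.mpr (hxy.mp h)) (sub_pos.mpr h)
    · have hy' : y₂ < y₁ := hy.lt_or_gt.resolve_left fun h' => h.not_gt (hxy.mpr h')
      exact div_pos_of_neg_of_neg (sub_neg.mpr hy') (sub_neg.mpr h)
  refine ⟨fun x => y₁ + (x - x₁) * ((y₂ - y₁) / (x₂ - x₁)), fun x x' h => ?_, by simp, ?_⟩
  · exact add_lt_add_right (mul_lt_mul_of_pos_right (sub_lt_sub_right h _) hslope) _
  · field_simp [sub_ne_zero.mpr hx.symm]
    ring

theorem eq_of_eq_of_lt_iff_lt {α β : Type*} [LinearOrder α] [LinearOrder β] {a b : α} {c d : β}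
    (h₁ : a < b ↔ c < d) (h₂ : b < a ↔ d < c) (h : a = b) : c = d :=
  le_antisymm (not_lt.mp fun hdc => (h₂.mpr hdc).ne h.symm) (not_lt.mp fun hcd => (h₁.mpr hcd).ne h)

theorem not_ppAvoids_of_compatible {n ℓ : ℕ} {α β γ : Type*} [LinearOrder α] [LinearOrder β]
    [LinearOrder γ] {π : Fin n → Option α} {p : Fin ℓ → β}
    (hπ : ∀ x y v, π x = some v → π y = some v → x = y) (hp : Function.Injective p)
    (f : Fin n → γ) (hf : ∀ x y vx vy, π x = some vx → π y = some vy → (f x < f y ↔ vx < vy))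
    {g : Fin ℓ → Fin n} (hg : StrictMono g) (hfg : ∀ a b, f (g a) < f (g b) ↔ p a < p b) :
    ¬ PPAvoids π p := by
  obtain ⟨σ, hσ⟩ := exists_perm_lt_iff_lt (fun x => toLex (f x, x))
    fun x y h => congrArg (fun z => (ofLex z).2) h
  have hσf : ∀ x y, (f x = f y → x = y) → (σ x < σ y ↔ f x < f y) := fun x y hxy => by
    rw [hσ, Prod.Lex.toLex_lt_toLex]
    exact or_iff_left fun ⟨he, hlt⟩ => hlt.ne (hxy he)
  refine fun hav => hav σ (fun x y vx vy hx hy => ?_) ⟨g, hg, fun a b => ?_⟩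
  · refine (hσf x y fun he => hπ x y vx hx ?_).trans (hf x y vx vy hx hy)
    rwa [eq_of_eq_of_lt_iff_lt (hf x y vx vy hx hy) (hf y x vy vx hy hx) he]
  · exact (hσf (g a) (g b) fun he =>
      congrArg g (hp (eq_of_eq_of_lt_iff_lt (hfg a b) (hfg b a) he))).trans (hfg a b)

theorem not_ppAvoids_of_lt_iff_lt {n k m r : ℕ} {p : Fin (k + 2) → Fin r}
    (hp : Function.Injective p) {H : Finset (Fin n)} (hH : #H = k) {π : Fin n → Option (Fin m)}
    (hhole : ∀ i, π i = none ↔ i ∈ H) (hπ : ∀ x y v, π x = some v → π y = some v → x = y)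
    {i j : Fin n} {vi vj : Fin m} (hij : i < j) (hi : π i = some vi) (hj : π j = some vj)
    {a b : Fin (k + 2)} (ha : #{h ∈ H | h < i} = a) (hb : #{h ∈ H | h < j} + 1 = b)
    (hviolate : ¬ (vi < vj ↔ p b < p a)) : ¬ PPAvoids π p := by
  classical
  have hiH : i ∉ H := by rw [← hhole, hi]; simp
  have hjH : j ∉ H := by rw [← hhole, hj]; simp
  set S := insert i (insert j H)
  have hS : #S = k + 2 := by
    rw [card_insert_of_notMem (by simp [hij.ne, hiH]), card_insert_of_notMem hjH, hH]
  set e := S.orderIsoOfFin hS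
  have hea : (e a : Fin n) = i := by
    refine coe_orderIsoOfFin_eq_of_card_filter_lt hS (mem_insert_self i _) ?_
    rw [← ha]
    simp [S, filter_insert, hij.not_gt]
  have heb : (e b : Fin n) = j := by
    refine coe_orderIsoOfFin_eq_of_card_filter_lt hS (by simp [S]) ?_
    rw [← hb, ← card_insert_of_notMem (a := i) (by simp [hiH])]
    simp [S, filter_insert, hij]
  have hpab : p a ≠ p b := hp.ne fun hab => hij.ne (by rw [← hea, ← heb, hab])
  have hvij : vi ≠ vj := fun hv => hij.ne (hπ i j vi hi (hv ▸ hj))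
  obtain ⟨L, hL, hLa, hLb⟩ := exists_strictMono_map_eq (x₁ := ((p a : ℕ) : ℚ)) (x₂ := (p b : ℕ))
    (y₁ := (vi : ℕ)) (y₂ := (vj : ℕ)) (by simpa [Fin.val_inj] using hpab)
    (by simpa [Fin.val_inj] using hvij) (by
      rw [Nat.cast_lt, Nat.cast_lt, ← Fin.lt_def, ← Fin.lt_def]
      constructor
      · intro h
        by_contra h'
        exact hviolate (iff_of_false h' (lt_asymm h))
      · intro h
        exact (hpab.lt_or_gt).resolve_right fun h' => hviolate (iff_of_true h h'))
  let f : Fin n → ℚ := fun x =>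
    if hx : x ∈ S then L (p (e.symm ⟨x, hx⟩)) else (π x).elim 0 fun v => (v : ℕ)
  have hfe : ∀ s, f (e s) = L (p s) := fun s => by simp [f, (e s).2]
  have hfval : ∀ x v, π x = some v → f x = (v : ℕ) := by
    intro x v hx
    by_cases hxS : x ∈ S
    · rcases mem_insert.mp hxS with hxi | hxS'
      · rw [hxi, ← hea, hfe, hLa, Option.some_injective _ (hi.symm.trans (hxi ▸ hx))]
      · rcases mem_insert.mp hxS' with hxj | hxH
        · rw [hxj, ← heb, hfe, hLb, Option.some_injective _ (hj.symm.trans (hxj ▸ hx))]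
        · exact absurd ((hhole x).mpr hxH) (by simp [hx])
    · simp [f, hxS, hx]
  refine not_ppAvoids_of_compatible hπ hp f (g := fun s => (e s : Fin n)) ?_
    (fun s t hst => e.strictMono hst) fun s t => ?_
  · intro x y vx vy hx hy
    rw [hfval x vx hx, hfval y vy hy, Nat.cast_lt, Fin.lt_def]
  · rw [hfe, hfe, hL.lt_iff_lt, Nat.cast_lt, Fin.lt_def]

/-- For a pattern of length `k+2` and a partial permutation with `k` holes,
`π` avoids `p` iff for all non-hole positions `i < j`, with `i` in the interval
`I_a` and `j` in the interval `I_b` (here `a`, `b` are 1-indexed; 0-indexed they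
are the numbers of holes preceding `i` resp. `j`),
the relative order of `π_i, π_j` differs from that of `p_a, p_{b+1}`. -/
theorem avoid_iff_order_condition (n k : ℕ) (p : Fin (k + 2) → Fin (k + 2))
    (hp : Function.Bijective p) (H : Finset (Fin n)) (hH : H.card = k)
    (π : Fin n → Option (Fin (n - k)))
    (hhole : ∀ i, π i = none ↔ i ∈ H)
    (hval : ∀ v : Fin (n - k), ∃! i : Fin n, π i = some v) :
    PPAvoids π p ↔
      ∀ i j : Fin n, ∀ vi vj : Fin (n - k), i < j →
        π i = some vi → π j = some vj →
        (vi < vj ↔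
          p ⟨(H.filter (· < j)).card + 1, by
              have := Finset.card_filter_le H (· < j); omega⟩
            < p ⟨(H.filter (· < i)).card, by
              have := Finset.card_filter_le H (· < i); omega⟩) := by
  constructor
  · intro hav i j vi vj hij hi hj
    by_contra hviolate
    exact not_ppAvoids_of_lt_iff_lt hp.injective hH hhole
      (fun x y v hx hy => (hval v).unique hx hy) hij hi hj rfl rfl hviolate hav
  · rintro hcond σ hσ ⟨g, hg, hgp⟩
    obtain ⟨s, t, hst, hs, ht, hcs, hct⟩ :=
      exists_pair_notMem_card_filter_lt_eq (H := H) hg (by rw [hH])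
    obtain ⟨vs, hvs⟩ := Option.ne_none_iff_exists'.mp (mt (hhole _).mp hs)
    obtain ⟨vt, hvt⟩ := Option.ne_none_iff_exists'.mp (mt (hhole _).mp ht)
    have hcond_st := hcond (g s) (g t) vs vt (hg hst) hvs hvt
    simp only [hcs, hct, Fin.eta] at hcond_st
    have hswap : p s < p t ↔ p t < p s :=
      (hgp s t).symm.trans ((hσ _ _ _ _ hvs hvt).trans hcond_st)
    rcases (hp.injective.ne hst.ne).lt_or_gt with h | h
    · exact lt_asymm h (hswap.mp h)
    · exact lt_asymm h (hswap.mpr h)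
end

section
/- Let p be a permutation of length ℓ = k+2, n an integer, and H ⊆ {1,...,n} a set of k hole positions. Then the number of p-avoiding partial permutations with hole set H is at most 1. -/
open Finset

/-!
Two distinct non-hole positions `x, y` together with the `k` holes form `k + 2` positions,
which a strictly monotone `g` matches with the entries of `p`. If `π x, π y` were ordered like
the corresponding entries of `p`, an affine map through these two points would fill the holes
with rationals so that `σ ∘ g` is order-isomorphic to `p` for an extension `σ` of `π`. So in
every avoider the values at `x, y` are ordered opposite to `p`, independently of `π`; since each
value is the number of smaller values, this order determines the avoider.
-/

lemma exists_perm_lt_iff_of_ne {n : ℕ} {γ : Type*} [LinearOrder γ] (f : Fin n → γ) :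
    ∃ σ : Equiv.Perm (Fin n), ∀ i j, f i ≠ f j → (σ i < σ j ↔ f i < f j) := by
  refine ⟨(Tuple.sort f).symm, fun i j hij => ⟨fun h => ?_, fun h => ?_⟩⟩
  · have := Tuple.monotone_sort f h.le
    simp only [Function.comp_apply, Equiv.apply_symm_apply] at this
    exact this.lt_of_ne hij
  · by_contra hle
    have := Tuple.monotone_sort f (not_lt.1 hle)
    simp only [Function.comp_apply, Equiv.apply_symm_apply] at this
    exact this.not_gt h

lemma exists_strictMono_of_lt_iff_lt {K : Type*} [Field K] [LinearOrder K]
    [IsStrictOrderedRing K]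
    {t₀ t₁ u v : K} (ht : t₀ ≠ t₁) (huv : u ≠ v) (h : u < v ↔ t₀ < t₁) :
    ∃ φ : K → K, StrictMono φ ∧ φ t₀ = u ∧ φ t₁ = v := by
  have hs : 0 < (v - u) / (t₁ - t₀) := by
    rcases huv.lt_or_gt with huv | huv
    · exact div_pos (sub_pos.2 huv) (sub_pos.2 (h.1 huv))
    · exact div_pos_of_neg_of_neg (sub_neg.2 huv)
        (sub_neg.2 ((ht.lt_or_gt.resolve_left fun h' => huv.not_gt (h.2 h'))))
  refine ⟨fun t => u + (v - u) / (t₁ - t₀) * (t - t₀), fun a b hab => ?_, by simp, ?_⟩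
  · dsimp only
    gcongr
  · field_simp [sub_ne_zero.2 ht.symm]
    ring

lemma exists_extension_containsPat {n m ℓ r : ℕ} {π : Fin n → Option (Fin m)}
    (hπ : ∀ i j v, π i = some v → π j = some v → i = j)
    {p : Fin ℓ → Fin r} (hp : Function.Injective p)
    {g : Fin ℓ → Fin n} (hg : StrictMono g) {a₀ a₁ : Fin ℓ} (ha : a₀ ≠ a₁)
    {u v : Fin m} (hu : π (g a₀) = some u) (hv : π (g a₁) = some v)
    (hholes : ∀ a, a ≠ a₀ → a ≠ a₁ → π (g a) = none)
    (h : u < v ↔ p a₀ < p a₁) :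
    ∃ σ : Equiv.Perm (Fin n), IsExtension σ π ∧ ContainsPat (⇑σ) p := by
  have huv : u ≠ v := fun e => ha (hg.injective (hπ _ _ _ hu (e ▸ hv)))
  obtain ⟨φ, hφ, hφ₀, hφ₁⟩ := exists_strictMono_of_lt_iff_lt (K := ℚ)
    (t₀ := (p a₀ : ℕ)) (t₁ := (p a₁ : ℕ)) (u := (u : ℕ)) (v := (v : ℕ))
    (by simpa [Fin.val_inj] using hp.ne ha) (by simpa [Fin.val_inj] using huv)
    (by simpa using h)
  -- holes outside the range of `g` play no role and get the value `0`
  let f : Fin n → ℚ := fun i =>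
    (π i).elim (Function.extend g (fun a => φ (p a : ℕ)) 0 i) (fun w => (w : ℕ))
  have hf_some : ∀ i w, π i = some w → f i = (w : ℕ) := by
    intro i w hw
    simp [f, hw]
  have hf_g : ∀ a, f (g a) = φ (p a : ℕ) := by
    intro a
    by_cases h₀ : a = a₀
    · rw [h₀, hf_some _ _ hu, hφ₀]
    by_cases h₁ : a = a₁
    · rw [h₁, hf_some _ _ hv, hφ₁]
    simp [f, hholes a h₀ h₁, hg.injective.extend_apply]
  obtain ⟨σ, hσ⟩ := exists_perm_lt_iff_of_ne f
  refine ⟨σ, fun i j vi vj hi hj => ?_, g, hg, fun a b => ?_⟩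
  · rcases eq_or_ne vi vj with rfl | hne
    · obtain rfl := hπ _ _ _ hi hj
      simp
    · have hf : f i ≠ f j := by
        simpa [hf_some _ _ hi, hf_some _ _ hj] using Fin.val_injective.ne hne
      rw [hσ i j hf, hf_some _ _ hi, hf_some _ _ hj]
      simp
  · rcases eq_or_ne a b with rfl | hne
    · simp
    · have hf : f (g a) ≠ f (g b) := by
        rw [hf_g, hf_g]
        exact hφ.injective.ne (by simpa [Fin.val_inj] using hp.ne hne)
      rw [hσ _ _ hf, hf_g, hf_g, hφ.lt_iff_lt]
      simp

lemma PPAvoids.lt_iff_of_holes {n m ℓ r : ℕ} {π : Fin n → Option (Fin m)}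
    (hπ : ∀ i j v, π i = some v → π j = some v → i = j)
    {p : Fin ℓ → Fin r} (hp : Function.Injective p) (hav : PPAvoids π p)
    {g : Fin ℓ → Fin n} (hg : StrictMono g) {a₀ a₁ : Fin ℓ} (ha : a₀ ≠ a₁)
    {u v : Fin m} (hu : π (g a₀) = some u) (hv : π (g a₁) = some v)
    (hholes : ∀ a, a ≠ a₀ → a ≠ a₁ → π (g a) = none) :
    u < v ↔ p a₁ < p a₀ := by
  have hnot : ¬ (u < v ↔ p a₀ < p a₁) := fun h => by
    obtain ⟨σ, hext, hcon⟩ := exists_extension_containsPat hπ hp hg ha hu hv hholes h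
    exact hav σ hext hcon
  rw [← (hp.ne ha.symm).le_iff_lt, ← not_lt]
  tauto

lemma Finset.exists_strictMono_of_notMem {α : Type*} [LinearOrder α] {H : Finset α} {k : ℕ}
    (hH : H.card = k) {x y : α} (hx : x ∉ H) (hy : y ∉ H) (hxy : x ≠ y) :
    ∃ g : Fin (k + 2) → α, StrictMono g ∧ ∃ a₀ a₁, g a₀ = x ∧ g a₁ = y ∧
      ∀ a, a ≠ a₀ → a ≠ a₁ → g a ∈ H := by
  set S := insert x (insert y H)
  have hS : S.card = k + 2 := by
    rw [card_insert_of_notMem (by simp [hx, hxy]), card_insert_of_notMem hy, hH]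
  have hrange : ∀ z ∈ S, ∃ a, S.orderEmbOfFin hS a = z := fun z hz => by
    rwa [← Set.mem_range, range_orderEmbOfFin]
  obtain ⟨a₀, ha₀⟩ := hrange x (mem_insert_self _ _)
  obtain ⟨a₁, ha₁⟩ := hrange y (mem_insert_of_mem (mem_insert_self _ _))
  refine ⟨S.orderEmbOfFin hS, (S.orderEmbOfFin hS).strictMono, a₀, a₁, ha₀, ha₁,
    fun a h₀ h₁ => ?_⟩
  have hinj := (S.orderEmbOfFin hS).injective
  rcases mem_insert.1 (orderEmbOfFin_mem S hS a) with h | h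
  · exact absurd (hinj (h.trans ha₀.symm)) h₀
  rcases mem_insert.1 h with h | h
  · exact absurd (hinj (h.trans ha₁.symm)) h₁
  exact h

lemma IsPPermH.injective_some {n : ℕ} {H : Finset (Fin n)}
    {π : Fin n → Option (Fin (n - H.card))} (hπ : IsPPermH H π) :
    ∀ i j v, π i = some v → π j = some v → i = j :=
  fun _ _ v hi hj => (hπ.2 v).unique hi hj

lemma IsPPermH.notMem_of_eq_some {n : ℕ} {H : Finset (Fin n)}
    {π : Fin n → Option (Fin (n - H.card))} (hπ : IsPPermH H π) {i : Fin n} {v}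
    (hi : π i = some v) : i ∉ H := by
  simp [← hπ.1 i, hi]

lemma card_filter_some_lt {n m : ℕ} {π : Fin n → Option (Fin m)}
    (hπ : ∀ v, ∃! i, π i = some v) (v : Fin m) :
    (univ.filter fun i => ∃ w, π i = some w ∧ w < v).card = v := by
  rw [← Fin.card_Iio v]
  refine card_bij (fun i _ => (π i).getD v) ?_ ?_ ?_
  · simp only [mem_filter, mem_univ, true_and, mem_Iio]
    rintro i ⟨w, hw, hlt⟩
    simpa [hw]
  · simp only [mem_filter, mem_univ, true_and]
    rintro i ⟨w, hw, -⟩ j ⟨w', hw', -⟩ h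
    simp only [hw, hw', Option.getD_some] at h
    subst h
    exact (hπ w).unique hw hw'
  · intro w hw
    obtain ⟨i, hi, -⟩ := hπ w
    exact ⟨i, by simpa [hi] using hw, by simp [hi]⟩

lemma IsPPermH.eq_of_lt_iff_lt {n : ℕ} {H : Finset (Fin n)}
    {π π' : Fin n → Option (Fin (n - H.card))} (hπ : IsPPermH H π) (hπ' : IsPPermH H π')
    (h : ∀ x y u v u' v', π x = some u → π y = some v → π' x = some u' → π' y = some v' →
      (u < v ↔ u' < v')) :
    π = π' := by
  have hsome : ∀ i, (∃ w, π i = some w) ↔ ∃ w', π' i = some w' := fun i => by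
    simp only [← Option.ne_none_iff_exists', ne_eq, hπ.1, hπ'.1]
  funext y
  by_cases hy : y ∈ H
  · rw [(hπ.1 y).2 hy, (hπ'.1 y).2 hy]
  obtain ⟨v, hv⟩ := Option.ne_none_iff_exists'.1 (mt (hπ.1 y).1 hy)
  obtain ⟨v', hv'⟩ := (hsome y).1 ⟨v, hv⟩
  rw [hv, hv', Option.some_inj, Fin.ext_iff, ← card_filter_some_lt hπ.2 v,
    ← card_filter_some_lt hπ'.2 v']
  congr 1
  ext x
  simp only [mem_filter, mem_univ, true_and]
  constructor
  · rintro ⟨w, hw, hlt⟩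
    obtain ⟨w', hw'⟩ := (hsome x).1 ⟨w, hw⟩
    exact ⟨w', hw', (h x y w v w' v' hw hv hw' hv').1 hlt⟩
  · rintro ⟨w', hw', hlt⟩
    obtain ⟨w, hw⟩ := (hsome x).2 ⟨w', hw'⟩
    exact ⟨w, hw, (h x y w v w' v' hw hv hw' hv').2 hlt⟩

lemma lt_iff_lt_of_ppAvoids {n k r : ℕ} {p : Fin (k + 2) → Fin r} (hp : Function.Injective p)
    {H : Finset (Fin n)} (hH : H.card = k) {π π' : Fin n → Option (Fin (n - H.card))}
    (hπ : IsPPermH H π) (hπ' : IsPPermH H π') (hav : PPAvoids π p) (hav' : PPAvoids π' p)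
    {x y : Fin n} {u v u' v' : Fin (n - H.card)} (hu : π x = some u) (hv : π y = some v)
    (hu' : π' x = some u') (hv' : π' y = some v') :
    u < v ↔ u' < v' := by
  rcases eq_or_ne x y with rfl | hxy
  · obtain rfl := Option.some_injective _ (hu.symm.trans hv)
    obtain rfl := Option.some_injective _ (hu'.symm.trans hv')
    simp
  obtain ⟨g, hg, a₀, a₁, rfl, rfl, hgH⟩ :=
    exists_strictMono_of_notMem hH (hπ.notMem_of_eq_some hu) (hπ.notMem_of_eq_some hv) hxy
  have ha : a₀ ≠ a₁ := fun h => hxy (congrArg g h)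
  rw [hav.lt_iff_of_holes hπ.injective_some hp hg ha hu hv
      fun a h₀ h₁ => (hπ.1 _).2 (hgH a h₀ h₁),
    hav'.lt_iff_of_holes hπ'.injective_some hp hg ha hu' hv'
      fun a h₀ h₁ => (hπ'.1 _).2 (hgH a h₀ h₁)]

/-- For a pattern of length `k+2` and a hole set of size `k`, there is at most
one avoiding partial permutation. -/
theorem at_most_one_avoider (n k : ℕ) (p : Fin (k + 2) → Fin (k + 2))
    (hp : Function.Bijective p) (H : Finset (Fin n)) (hH : H.card = k) :
    snH H p ≤ 1 := by
  refine Finite.card_le_one_iff_subsingleton.2 ⟨?_⟩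
  rintro ⟨π, hπ, hav⟩ ⟨π', hπ', hav'⟩
  exact Subtype.ext <| hπ.eq_of_lt_iff_lt hπ' fun _ _ _ _ _ _ hu hv hu' hv' =>
    lt_iff_lt_of_ppAvoids hp.injective hH hπ hπ' hav hav' hu hv hu' hv'
end

section
/- Let p ∈ S_ℓ and k = ℓ−2. Then p is a Baxter permutation if and only if for every n ≥ k and every k-element subset H ⊆ {1,...,n}, s_n^H(p) = 1. Moreover these conditions are equivalent to: for n = k+3 and every k-element H ⊆ [n], s_n^H(p) = 1; and to: there exists n ≥ k+3 such that s_n^H(p) = 1 for every k-element H ⊆ [n]. -/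
/-!
With `k` holes and a pattern of length `k + 2`, every occurrence of `p` in an extension of a
partial permutation `π` meets at least two filled positions. If filled positions `x < y` have `i`
and `j` holes before them, the holes can be filled so that together with `x` and `y` they form an
occurrence of `p` at the indices `i` and `j + 1`, unless `π x < π y ↔ p (j + 1) < p i`; so avoiding
`p` forces these comparisons. A discrete intermediate value argument shows that every occurrence
contains two filled positions at which it has exactly this tight form, so `π` avoids `p` iff it
obeys all the forced comparisons. They determine `π`, and they are consistent, i.e. form a
transitive tournament on the filled positions, exactly when `p` is Baxter: a `2413` or `3142` at
`a < b < b + 1 < d` becomes a cyclic triangle on the filled positions `a`, `b + 1`, `d + 1` when all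
other positions of `[0, k + 3)` are holes.
-/

open Finset

open Function

theorem lt_iff_lt_of_imp {α β : Type*} [LinearOrder α] [LinearOrder β] {a b : α} {c d : β}
    (hlt : a < b → c < d) (hgt : b < a → d < c) (heq : a = b → c = d) : c < d ↔ a < b := by
  refine ⟨fun hcd => ?_, hlt⟩
  rcases lt_trichotomy a b with h | h | h
  · exact h
  · exact absurd (heq h) hcd.ne
  · exact absurd (hgt h) hcd.not_gt

theorem exists_perm_lt_of_lt {n : ℕ} {α : Type*} [LinearOrder α] (f : Fin n → α) :
    ∃ σ : Equiv.Perm (Fin n), ∀ i j, f i < f j → σ i < σ j := by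
  set f' : Fin n → α ×ₗ Fin n := fun i => toLex (f i, i)
  have hf' : Injective f' := fun i j h => congrArg Prod.snd (toLex.injective h)
  have hsort : StrictMono (f' ∘ Tuple.sort f') :=
    (Tuple.monotone_sort f').strictMono_of_injective (hf'.comp (Tuple.sort f').injective)
  refine ⟨(Tuple.sort f').symm, fun i j hij => hsort.lt_iff_lt.mp ?_⟩
  simpa [f'] using Prod.Lex.lt_iff.mpr (Or.inl hij)

theorem exists_equiv_fin_lt_iff {α : Type*} [Fintype α] (r : α → α → Prop)
    [IsStrictTotalOrder α r] : ∃ e : α ≃ Fin (Fintype.card α), ∀ a b, e a < e b ↔ r a b := by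
  classical
  let := linearOrderOfSTO r
  exact ⟨(Fintype.orderIsoFinOfCardEq α rfl).symm.toEquiv, fun a b =>
    (Fintype.orderIsoFinOfCardEq α rfl).symm.lt_iff_lt⟩

section PairOrder

variable {α : Type*} [LinearOrder α]

def PairOrder (R : α → α → Prop) (x y : α) : Prop :=
  x < y ∧ R x y ∨ y < x ∧ ¬R y x

theorem isStrictTotalOrder_pairOrder {R : α → α → Prop}
    (h₁ : ∀ x y z, x < y → y < z → R x y → R y z → R x z)
    (h₂ : ∀ x y z, x < y → y < z → ¬R x y → ¬R y z → ¬R x z) :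
    IsStrictTotalOrder α (PairOrder R) where
  trichotomous x y hxy hyx := by
    unfold PairOrder at hxy hyx
    rcases lt_trichotomy x y with h | h | h <;> tauto
  irrefl x h := by rcases h with ⟨h, -⟩ | ⟨h, -⟩ <;> exact lt_irrefl x h
  trans x y z hxy hyz := by
    rcases hxy with ⟨hxy, r₁⟩ | ⟨hyx, r₁⟩ <;> rcases hyz with ⟨hyz, r₂⟩ | ⟨hzy, r₂⟩
    · exact .inl ⟨hxy.trans hyz, h₁ x y z hxy hyz r₁ r₂⟩
    · rcases lt_trichotomy x z with hxz | rfl | hzx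
      · exact .inl ⟨hxz, by_contra fun r => h₂ x z y hxz hzy r r₂ r₁⟩
      · exact absurd r₁ r₂
      · exact .inr ⟨hzx, fun r => r₂ (h₁ z x y hzx hxy r r₁)⟩
    · rcases lt_trichotomy x z with hxz | rfl | hzx
      · exact .inl ⟨hxz, by_contra fun r => h₂ y x z hyx hxz r₁ r r₂⟩
      · exact absurd r₂ r₁
      · exact .inr ⟨hzx, fun r => r₁ (h₁ y z x hyz hzx r₂ r)⟩
    · exact .inr ⟨hzy.trans hyx, h₂ z y x hzy hyx r₂ r₁⟩

end PairOrder

section Extension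

variable {n ℓ : ℕ} {α β : Type*} [LinearOrder α] [LinearOrder β]

theorem exists_perm_lt_of_compatible {π : Fin n → Option α} {p : Fin ℓ → β}
    {g : Fin ℓ → Fin n} (hg : Injective g)
    (hcompat : ∀ a b va vb, π (g a) = some va → π (g b) = some vb → (va < vb ↔ p a < p b)) :
    ∃ σ : Equiv.Perm (Fin n), (∀ i j vi vj, π i = some vi → π j = some vj → vi < vj → σ i < σ j) ∧
      ∀ a b, p a < p b → σ (g a) < σ (g b) := by
  classical
  -- a hole `g a` is placed just above the largest filled entry that `p` puts below it
  let B : Fin ℓ → WithBot α := fun a =>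
    (univ.filter fun c => p c < p a).sup fun c => (π (g c) : WithBot α)
  let key : Fin n → WithBot α ×ₗ WithBot β := fun i =>
    match π i with
    | some w => toLex (↑w, ⊥)
    | none => if h : ∃ a, g a = i then toLex (B h.choose, ↑(p h.choose)) else toLex (⊥, ⊥)
  have key_some {i w} (h : π i = some w) : key i = toLex (↑w, ⊥) := by simp [key, h]
  have key_none {a} (h : π (g a) = none) : key (g a) = toLex (B a, ↑(p a)) := by
    have hex : ∃ a', g a' = g a := ⟨a, rfl⟩
    simp only [key, h, dif_pos hex, hg hex.choose_spec]
  have le_B {a c w} (hc : π (g c) = some w) (hca : p c < p a) : (w : WithBot α) ≤ B a :=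
    Finset.le_sup_of_le (mem_filter.mpr ⟨mem_univ c, hca⟩) (le_of_eq hc.symm)
  have B_lt {a b w} (hb : π (g b) = some w) (hab : p a < p b) : B a < w := by
    refine (Finset.sup_lt_iff (WithBot.bot_lt_coe w)).mpr fun c hc => ?_
    rcases hgc : π (g c) with _ | w'
    · exact WithBot.bot_lt_coe w
    · exact WithBot.coe_lt_coe.mpr
        ((hcompat c b w' w hgc hb).mpr (((mem_filter.mp hc).2).trans hab))
  have key_lt_of_some {i j vi vj} (hi : π i = some vi) (hj : π j = some vj) (h : vi < vj) :
      key i < key j := by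
    rw [key_some hi, key_some hj]
    exact Prod.Lex.lt_iff.mpr (.inl (WithBot.coe_lt_coe.mpr h))
  have key_lt {a b} (hab : p a < p b) : key (g a) < key (g b) := by
    rcases ha : π (g a) with _ | wa <;> rcases hb : π (g b) with _ | wb
    · rw [key_none ha, key_none hb]
      refine Prod.Lex.toLex_strictMono (Prod.mk_lt_mk_of_le_of_lt ?_ (WithBot.coe_lt_coe.mpr hab))
      exact Finset.sup_mono fun c hc =>
        mem_filter.mpr ⟨mem_univ c, (mem_filter.mp hc).2.trans hab⟩
    · rw [key_none ha, key_some hb]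
      exact Prod.Lex.lt_iff.mpr (.inl (B_lt hb hab))
    · rw [key_some ha, key_none hb]
      exact Prod.Lex.toLex_strictMono
        (Prod.mk_lt_mk_of_le_of_lt (le_B ha hab) (WithBot.bot_lt_coe _))
    · exact key_lt_of_some ha hb ((hcompat a b wa wb ha hb).mpr hab)
  obtain ⟨σ, hσ⟩ := exists_perm_lt_of_lt key
  exact ⟨σ, fun i j vi vj hi hj h => hσ i j (key_lt_of_some hi hj h),
    fun a b h => hσ _ _ (key_lt h)⟩

theorem exists_isExtension_containsPat {π : Fin n → Option α}
    (hπ : ∀ i j v, π i = some v → π j = some v → i = j) {p : Fin ℓ → β} (hp : Injective p)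
    {g : Fin ℓ → Fin n} (hg : StrictMono g)
    (hcompat : ∀ a b va vb, π (g a) = some va → π (g b) = some vb → (va < vb ↔ p a < p b)) :
    ∃ σ : Equiv.Perm (Fin n), IsExtension σ π ∧ ContainsPat (⇑σ) p := by
  obtain ⟨σ, hfilled, hpat⟩ := exists_perm_lt_of_compatible hg.injective hcompat
  refine ⟨σ, fun i j vi vj hi hj => ?_, g, hg, fun a b => ?_⟩
  · exact lt_iff_lt_of_imp (hfilled i j vi vj hi hj) (hfilled j i vj vi hj hi)
      fun h => by rw [hπ i j vi hi (h ▸ hj)]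
  · exact lt_iff_lt_of_imp (hpat a b) (hpat b a) fun h => by rw [hp h]

end Extension

theorem exists_pred_and_not_pred_succ {P : ℕ → Prop} {a b : ℕ} (hab : a ≤ b) (ha : P a)
    (hb : ¬P b) : ∃ c, a ≤ c ∧ c < b ∧ P c ∧ ¬P (c + 1) := by
  induction b, hab using Nat.le_induction with
  | base => exact absurd ha hb
  | succ b hab ih =>
    by_cases h : P b
    · exact ⟨b, hab, b.lt_succ_self, h, hb⟩
    · obtain ⟨c, hac, hcb, hc, hc'⟩ := ih h
      exact ⟨c, hac, hcb.trans b.lt_succ_self, hc, hc'⟩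

theorem exists_tight_pair_of_monotone {u : ℕ → ℕ} (hu : Monotone u) {N : ℕ}
    (hN : u (N + 1) < N) :
    ∃ c c', c < c' ∧ c' ≤ N ∧ u c = c ∧ u (c + 1) = c ∧ u c' + 1 = c' ∧ u (c' + 1) + 1 = c' := by
  obtain ⟨c, -, hcN, hc, hc₁⟩ := exists_pred_and_not_pred_succ (P := fun c => c ≤ u c)
    (Nat.zero_le (N + 1)) (Nat.zero_le _) (by omega)
  have hmono : u c ≤ u (c + 1) := hu c.le_succ
  obtain ⟨c', hcc', hc'N, hc', hc'₁⟩ := exists_pred_and_not_pred_succ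
    (P := fun c => c ≤ u c + 1) (a := c + 1) (b := N + 1) (by omega) (by omega) (by omega)
  have hmono' : u c' ≤ u (c' + 1) := hu c'.le_succ
  exact ⟨c, c', by omega, by omega, by omega, by omega, by omega, by omega⟩

section HoleCounts

variable {n : ℕ}

def holesBelow (H : Finset (Fin n)) (x : Fin n) : ℕ := #(H.filter (· < x))

theorem holesBelow_le_card (H : Finset (Fin n)) (x : Fin n) : holesBelow H x ≤ #H :=
  card_filter_le _ _

theorem holesBelow_mono (H : Finset (Fin n)) : Monotone (holesBelow H) := fun _ _ hxy =>
  card_le_card fun _ hz => mem_filter.mpr ⟨(mem_filter.mp hz).1, (mem_filter.mp hz).2.trans_le hxy⟩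

theorem holesBelow_lt_of_mem {H : Finset (Fin n)} {x y : Fin n} (hx : x ∈ H) (hxy : x < y) :
    holesBelow H x < holesBelow H y := by
  refine card_lt_card ((ssubset_iff_of_subset fun z hz => ?_).mpr ⟨x, ?_, ?_⟩)
  · exact mem_filter.mpr ⟨(mem_filter.mp hz).1, (mem_filter.mp hz).2.trans hxy⟩
  · exact mem_filter.mpr ⟨hx, hxy⟩
  · simp

theorem holesBelow_lt_card_of_mem {H : Finset (Fin n)} {x : Fin n} (hx : x ∈ H) :
    holesBelow H x < #H :=
  card_lt_card (filter_ssubset.mpr ⟨x, hx, lt_irrefl x⟩)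

theorem holesBelow_orderEmbOfFin {m : ℕ} (s : Finset (Fin n)) (h : #s = m) (j : Fin m) :
    holesBelow s (s.orderEmbOfFin h j) = j := by
  have : s.filter (· < s.orderEmbOfFin h j) = (Iio j).map (s.orderEmbOfFin h).toEmbedding := by
    ext y
    simp only [mem_filter, mem_map, mem_Iio, RelEmbedding.coe_toEmbedding]
    constructor
    · rintro ⟨hy, hlt⟩
      obtain ⟨i, rfl⟩ : y ∈ Set.range (s.orderEmbOfFin h) := by simpa using hy
      exact ⟨i, (s.orderEmbOfFin h).lt_iff_lt.mp hlt, rfl⟩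
    · rintro ⟨i, hi, rfl⟩
      exact ⟨s.orderEmbOfFin_mem h i, (s.orderEmbOfFin h).lt_iff_lt.mpr hi⟩
  rw [holesBelow, this, card_map, Fin.card_Iio]

theorem orderEmbOfFin_eq_of_holesBelow {m : ℕ} {s : Finset (Fin n)} (h : #s = m) {x : Fin n}
    (hx : x ∈ s) {j : Fin m} (hj : (j : ℕ) = holesBelow s x) : s.orderEmbOfFin h j = x := by
  obtain ⟨i, rfl⟩ : x ∈ Set.range (s.orderEmbOfFin h) := by simpa using hx
  rw [holesBelow_orderEmbOfFin, ← Fin.ext_iff] at hj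
  rw [hj]

end HoleCounts

theorem val_eq_card_filter {n m : ℕ} {π : Fin n → Option (Fin m)}
    (hπ : ∀ v, ∃! i, π i = some v) (v : Fin m) :
    (v : ℕ) = #(univ.filter fun i => ∃ w < v, π i = some w) := by
  rw [← Fin.card_Iio v]
  refine card_bij (fun w _ => (hπ w).exists.choose) (fun w hw => ?_)
    (fun w₁ _ w₂ _ h => ?_) (fun i hi => ?_)
  · exact mem_filter.mpr ⟨mem_univ _, w, mem_Iio.mp hw, (hπ w).exists.choose_spec⟩
  · exact Option.some_inj.mp
      ((hπ w₁).exists.choose_spec.symm.trans (h ▸ (hπ w₂).exists.choose_spec))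
  · obtain ⟨w, hw, hi⟩ := (mem_filter.mp hi).2
    exact ⟨w, mem_Iio.mpr hw, (hπ w).unique (hπ w).exists.choose_spec hi⟩

section PartialPerm

variable {n : ℕ} {H : Finset (Fin n)} {π : Fin n → Option (Fin (n - #H))}

theorem IsPPermH.injective (hπ : IsPPermH H π) {i j : Fin n} {v : Fin (n - #H)} (hi : π i = some v)
    (hj : π j = some v) : i = j :=
  (hπ.2 v).unique hi hj

theorem IsPPermH.exists_eq_some (hπ : IsPPermH H π) {x : Fin n} (hx : x ∉ H) : ∃ v, π x = some v :=
  Option.ne_none_iff_exists'.mp fun h => hx ((hπ.1 x).mp h)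

theorem IsPPermH.notMem (hπ : IsPPermH H π) {x : Fin n} {v : Fin (n - #H)} (hx : π x = some v) :
    x ∉ H :=
  fun h => by simp [(hπ.1 x).mpr h] at hx

end PartialPerm

section ForcedOrder

open Fin.NatCast

variable {n k : ℕ} {β : Type*} [LinearOrder β]

/-- If a filled position `x` has `i` holes before it and a filled `y > x` has `j`, an occurrence
of `p` made of all `k` holes together with `x` and `y` puts `x` at index `i` and `y` at `j + 1`. -/
def ForcedLT (p : Fin (k + 2) → β) (i j : ℕ) : Prop :=
  p ((j + 1 : ℕ) : Fin (k + 2)) < p (i : Fin (k + 2))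

def HasForcedOrder {α : Type*} [LinearOrder α] (p : Fin (k + 2) → β) (H : Finset (Fin n))
    (π : Fin n → Option α) : Prop :=
  ∀ x y vx vy, x < y → π x = some vx → π y = some vy →
    (vx < vy ↔ ForcedLT p (holesBelow H x) (holesBelow H y))

theorem exists_strictMono_holes_and_pair {H : Finset (Fin n)} (hH : #H = k) {x y : Fin n}
    (hxy : x < y) (hx : x ∉ H) (hy : y ∉ H) :
    ∃ g : Fin (k + 2) → Fin n, StrictMono g ∧ (∀ a, g a ∈ H ∨ g a = x ∨ g a = y) ∧
      g ↑(holesBelow H x) = x ∧ g ↑(holesBelow H y + 1) = y := by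
  classical
  let G := insert x (insert y H)
  have hG : #G = k + 2 := by simp [G, card_insert_of_notMem, hx, hy, hxy.ne, hH]
  refine ⟨G.orderEmbOfFin hG, (G.orderEmbOfFin hG).strictMono, fun a => ?_, ?_, ?_⟩
  · have := G.orderEmbOfFin_mem hG a
    simp only [G, mem_insert] at this
    tauto
  · refine orderEmbOfFin_eq_of_holesBelow hG (by simp [G]) ?_
    rw [Fin.val_cast_of_lt (by have := holesBelow_le_card H x; omega)]
    simp [holesBelow, G, filter_insert, hxy.not_gt]
  · refine orderEmbOfFin_eq_of_holesBelow hG (by simp [G]) ?_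
    rw [Fin.val_cast_of_lt (by have := holesBelow_le_card H y; omega)]
    simp [holesBelow, G, filter_insert, hxy, hx]

theorem PPAvoids.hasForcedOrder {H : Finset (Fin n)} (hH : #H = k)
    {π : Fin n → Option (Fin (n - #H))} (hπ : IsPPermH H π) {p : Fin (k + 2) → β}
    (hp : Injective p) (hav : PPAvoids π p) : HasForcedOrder p H π := by
  intro x y vx vy hxy hx hy
  obtain ⟨g, hg, hgH, hgx, hgy⟩ :=
    exists_strictMono_holes_and_pair hH hxy (hπ.notMem hx) (hπ.notMem hy)
  set c : Fin (k + 2) := ↑(holesBelow H x)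
  set c' : Fin (k + 2) := ↑(holesBelow H y + 1)
  have hcc' : c < c' := hg.lt_iff_lt.mp (by rwa [hgx, hgy])
  have hfilled : ∀ a va, π (g a) = some va → a = c ∧ va = vx ∨ a = c' ∧ va = vy := by
    intro a va ha
    rcases hgH a with h | h | h
    · exact absurd h (hπ.notMem ha)
    · exact .inl ⟨hg.injective (h.trans hgx.symm), Option.some_inj.mp (ha.symm.trans (h ▸ hx))⟩
    · exact .inr ⟨hg.injective (h.trans hgy.symm), Option.some_inj.mp (ha.symm.trans (h ▸ hy))⟩
  have hvne : vx ≠ vy := fun h => hxy.ne (hπ.injective hx (h ▸ hy))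
  have hpne : p c ≠ p c' := hp.ne hcc'.ne
  by_contra hne
  have hswap : vx < vy ↔ p c < p c' := by
    rw [← hpne.le_iff_lt, ← not_lt]
    unfold ForcedLT at hne
    tauto
  obtain ⟨σ, hext, hcont⟩ := exists_isExtension_containsPat (fun _ _ _ => hπ.injective) hp hg
    fun a b va vb ha hb => by
      rcases hfilled a va ha with ⟨rfl, rfl⟩ | ⟨rfl, rfl⟩ <;>
        rcases hfilled b vb hb with ⟨rfl, rfl⟩ | ⟨rfl, rfl⟩
      · simp
      · exact hswap
      · exact lt_iff_lt_of_le_iff_le (by rw [hvne.le_iff_lt, hpne.le_iff_lt, hswap])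
      · simp
  exact hav σ hext hcont

theorem exists_tight_pair_of_strictMono {H : Finset (Fin n)} (hH : #H = k)
    {g : Fin (k + 2) → Fin n} (hg : StrictMono g) :
    ∃ c c' : Fin (k + 2), c < c' ∧ g c ∉ H ∧ g c' ∉ H ∧
      holesBelow H (g c) = c ∧ holesBelow H (g c') + 1 = c' := by
  -- the value `k` past the last index makes `u` jump at a hole there as well
  let u : ℕ → ℕ := fun c => if h : c < k + 2 then holesBelow H (g ⟨c, h⟩) else k
  have hu : Monotone u := by
    intro c d hcd
    simp only [u]
    split_ifs with hc hd hd
    · exact holesBelow_mono H (hg.monotone (Fin.mk_le_mk.mpr hcd))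
    · exact (holesBelow_le_card H _).trans hH.le
    · omega
    · exact le_rfl
  have hu_hole (c : ℕ) (hc : c < k + 2) (hmem : g ⟨c, hc⟩ ∈ H) : u c < u (c + 1) := by
    simp only [u, dif_pos hc]
    split_ifs with hc₁
    · exact holesBelow_lt_of_mem hmem (hg (Fin.mk_lt_mk.mpr c.lt_succ_self))
    · exact (holesBelow_lt_card_of_mem hmem).trans_eq hH
  obtain ⟨c, c', hcc', hc'N, hc, hc₁, hc', hc'₁⟩ :=
    exists_tight_pair_of_monotone hu (N := k + 1) (by simp [u])
  have hck : c < k + 2 := by omega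
  have hc'k : c' < k + 2 := by omega
  refine ⟨⟨c, hck⟩, ⟨c', hc'k⟩, hcc', fun h => ?_, fun h => ?_, ?_, ?_⟩
  · exact (hu_hole c hck h).ne (hc.trans hc₁.symm)
  · exact (hu_hole c' hc'k h).ne (by omega)
  · simpa [u, hck] using hc
  · simpa [u, hc'k] using hc'

theorem HasForcedOrder.ppAvoids {H : Finset (Fin n)} (hH : #H = k)
    {π : Fin n → Option (Fin (n - #H))} (hπ : IsPPermH H π) {p : Fin (k + 2) → β}
    (hp : Injective p) (hf : HasForcedOrder p H π) : PPAvoids π p := by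
  rintro σ hσ ⟨g, hg, hpat⟩
  obtain ⟨c, c', hcc', hcH, hc'H, hc, hc'⟩ := exists_tight_pair_of_strictMono hH hg
  obtain ⟨vx, hx⟩ := hπ.exists_eq_some hcH
  obtain ⟨vy, hy⟩ := hπ.exists_eq_some hc'H
  have h := hf _ _ _ _ (hg hcc') hx hy
  rw [ForcedLT, hc', hc, Fin.cast_val_eq_self, Fin.cast_val_eq_self, ← hσ _ _ _ _ hx hy,
    hpat] at h
  rcases (hp.ne hcc'.ne).lt_or_gt with hlt | hlt
  · exact lt_asymm hlt (h.mp hlt)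
  · exact lt_asymm hlt (h.mpr hlt)

theorem ppAvoids_iff_hasForcedOrder {H : Finset (Fin n)} (hH : #H = k)
    {π : Fin n → Option (Fin (n - #H))} (hπ : IsPPermH H π) {p : Fin (k + 2) → β}
    (hp : Injective p) : PPAvoids π p ↔ HasForcedOrder p H π :=
  ⟨PPAvoids.hasForcedOrder hH hπ hp, HasForcedOrder.ppAvoids hH hπ hp⟩

end ForcedOrder

section Uniqueness

variable {n k : ℕ} {β : Type*} [LinearOrder β] {p : Fin (k + 2) → β} {H : Finset (Fin n)}
  {π π' : Fin n → Option (Fin (n - #H))}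

theorem HasForcedOrder.lt_iff_lt (hπ : IsPPermH H π) (hπ' : IsPPermH H π')
    (hf : HasForcedOrder p H π) (hf' : HasForcedOrder p H π') {x y : Fin n}
    {v w v' w' : Fin (n - #H)} (hx : π x = some v) (hy : π y = some w) (hx' : π' x = some v')
    (hy' : π' y = some w') : v < w ↔ v' < w' := by
  rcases lt_trichotomy x y with h | rfl | h
  · exact (hf x y v w h hx hy).trans (hf' x y v' w' h hx' hy').symm
  · obtain rfl := Option.some_inj.mp (hx.symm.trans hy)
    obtain rfl := Option.some_inj.mp (hx'.symm.trans hy')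
    simp
  · have hne : w ≠ v := fun hwv => h.ne (hπ.injective hy (hwv ▸ hx))
    have hne' : w' ≠ v' := fun hwv => h.ne (hπ'.injective hy' (hwv ▸ hx'))
    refine lt_iff_lt_of_le_iff_le ?_
    rw [hne.le_iff_lt, hne'.le_iff_lt]
    exact (hf y x w v h hy hx).trans (hf' y x w' v' h hy' hx').symm

theorem IsPPermH.eq_of_hasForcedOrder (hπ : IsPPermH H π) (hπ' : IsPPermH H π')
    (hf : HasForcedOrder p H π) (hf' : HasForcedOrder p H π') : π = π' := by
  funext x
  rcases hx : π x with _ | v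
  · exact ((hπ'.1 x).mpr ((hπ.1 x).mp hx)).symm
  obtain ⟨v', hx'⟩ := hπ'.exists_eq_some (hπ.notMem hx)
  rw [hx', Option.some_inj, Fin.ext_iff, val_eq_card_filter hπ.2, val_eq_card_filter hπ'.2]
  refine congrArg card (filter_congr fun y _ => ?_)
  by_cases hy : y ∈ H
  · simp [(hπ.1 y).mpr hy, (hπ'.1 y).mpr hy]
  obtain ⟨w, hy⟩ := hπ.exists_eq_some hy
  obtain ⟨w', hy'⟩ := hπ'.exists_eq_some (hπ.notMem hy)
  simpa [hy, hy'] using hf.lt_iff_lt hπ hπ' hf' hy hx hy' hx'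

end Uniqueness

section Baxter

open Fin.NatCast

theorem IsBaxter.forcedLT_trans {k : ℕ} {p : Fin (k + 2) → Fin (k + 2)} (hb : IsBaxter p)
    (hp : Injective p) {i j l : ℕ} (hij : i ≤ j) (hjl : j ≤ l) (hlk : l ≤ k) :
    (ForcedLT p i j → ForcedLT p j l → ForcedLT p i l) ∧
      (¬ForcedLT p i j → ¬ForcedLT p j l → ¬ForcedLT p i l) := by
  rcases hij.eq_or_lt with rfl | hij
  · exact ⟨fun _ h => h, fun _ h => h⟩
  rcases hjl.eq_or_lt with rfl | hjl
  · exact ⟨fun h _ => h, fun h _ => h⟩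
  have hval (m : ℕ) (hm : m ≤ k + 1) : ((m : Fin (k + 2)) : ℕ) = m :=
    Fin.val_cast_of_lt (by omega)
  have hlt {m m' : ℕ} (h : m < m') (hm' : m' ≤ k + 1) : (m : Fin (k + 2)) < m' :=
    Fin.lt_def.mpr (by rw [hval m (by omega), hval m' hm']; exact h)
  have hbc : ((j : Fin (k + 2)) : ℕ) + 1 = ((j + 1 : ℕ) : Fin (k + 2)) := by
    rw [hval j (by omega), hval (j + 1) (by omega)]
  have hab := hlt hij (by omega)
  have hcd := hlt (show j + 1 < l + 1 by omega) (by omega)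
  have hpne {m m' : ℕ} (h : m < m') (hm' : m' ≤ k + 1) : p m ≠ p m' := hp.ne (hlt h hm').ne
  unfold ForcedLT
  constructor
  · intro h₁ h₂
    by_contra h₃
    have h₃ := (not_lt.mp h₃).lt_of_ne (hpne (show i < l + 1 by omega) (by omega))
    exact hb ⟨i, j, (j + 1 : ℕ), (l + 1 : ℕ), hab, hbc, hcd, .inl ⟨h₁, h₃, h₂⟩⟩
  · intro h₁ h₂ h₃
    have h₁ := (not_lt.mp h₁).lt_of_ne (hpne (show i < j + 1 by omega) (by omega))
    have h₂ := (not_lt.mp h₂).lt_of_ne (hpne (show j < l + 1 by omega) (by omega))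
    exact hb ⟨i, j, (j + 1 : ℕ), (l + 1 : ℕ), hab, hbc, hcd, .inr ⟨h₂, h₃, h₁⟩⟩

theorem isBaxter_of_forcedLT_trans {k : ℕ} {p : Fin (k + 2) → Fin (k + 2)}
    (h : ∀ i j l, i ≤ j → j ≤ l → l ≤ k →
      (ForcedLT p i j → ForcedLT p j l → ForcedLT p i l) ∧
      (¬ForcedLT p i j → ¬ForcedLT p j l → ¬ForcedLT p i l)) : IsBaxter p := by
  rintro ⟨a, b, c, d, hab, hbc, hcd, hpat⟩
  have hd : (d : ℕ) - 1 + 1 = d := Nat.sub_add_cancel (by omega)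
  have e₁ : ForcedLT p a b ↔ p c < p a := by
    rw [ForcedLT, hbc, Fin.cast_val_eq_self, Fin.cast_val_eq_self]
  have e₂ : ForcedLT p b (d - 1) ↔ p d < p b := by
    rw [ForcedLT, hd, Fin.cast_val_eq_self, Fin.cast_val_eq_self]
  have e₃ : ForcedLT p a (d - 1) ↔ p d < p a := by
    rw [ForcedLT, hd, Fin.cast_val_eq_self, Fin.cast_val_eq_self]
  have h := h a b (d - 1) (Fin.le_def.mp hab.le) (by omega) (by omega)
  rw [e₁, e₂, e₃] at h
  rcases hpat with ⟨h₁, h₂, h₃⟩ | ⟨h₁, h₂, h₃⟩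
  · exact lt_asymm h₂ (h.1 h₁ h₃)
  · exact h.2 (lt_asymm h₃) (lt_asymm h₁) h₂

end Baxter

theorem IsBaxter.exists_isPPermH_hasForcedOrder {n k : ℕ} {p : Fin (k + 2) → Fin (k + 2)}
    (hb : IsBaxter p) (hp : Injective p) {H : Finset (Fin n)} (hH : #H = k) :
    ∃ π, IsPPermH H π ∧ HasForcedOrder p H π := by
  classical
  let R (x y : {x // x ∉ H}) : Prop := ForcedLT p (holesBelow H x) (holesBelow H y)
  have htrans (x y z : {x // x ∉ H}) (hxy : x < y) (hyz : y < z) :=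
    hb.forcedLT_trans hp (holesBelow_mono H hxy.le) (holesBelow_mono H hyz.le)
      ((holesBelow_le_card H z).trans hH.le)
  have := isStrictTotalOrder_pairOrder (R := R) (fun x y z hxy hyz => (htrans x y z hxy hyz).1)
    (fun x y z hxy hyz => (htrans x y z hxy hyz).2)
  obtain ⟨e, he⟩ := exists_equiv_fin_lt_iff (PairOrder R)
  let E := e.trans (finCongr (by simp [Fintype.card_subtype_compl] : _ = n - #H))
  let π (x : Fin n) : Option (Fin (n - #H)) := if h : x ∈ H then none else some (E ⟨x, h⟩)
  have hπ {x : Fin n} {v} (h : π x = some v) : ∃ hx : x ∉ H, E ⟨x, hx⟩ = v := by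
    by_cases hx : x ∈ H <;> simp_all [π]
  refine ⟨π, ⟨fun x => by simp [π], fun v => ⟨E.symm v, by simp [π, (E.symm v).2], ?_⟩⟩,
    fun x y vx vy hxy hx hy => ?_⟩
  · intro y hy
    obtain ⟨hyH, rfl⟩ := hπ hy
    simp
  · obtain ⟨hxH, rfl⟩ := hπ hx
    obtain ⟨hyH, rfl⟩ := hπ hy
    simp only [E, Equiv.trans_apply, finCongr_apply, Fin.cast_lt_cast, he, PairOrder]
    simp [R, hxy, hxy.not_gt]

theorem exists_holesBelow_eq_of_le {n k i j l : ℕ} (hn : k + 3 ≤ n) (hij : i ≤ j) (hjl : j ≤ l)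
    (hl : l ≤ k) :
    ∃ H : Finset (Fin n), #H = k ∧ ∃ x y z : Fin n, x < y ∧ y < z ∧ x ∉ H ∧ y ∉ H ∧ z ∉ H ∧
      holesBelow H x = i ∧ holesBelow H y = j ∧ holesBelow H z = l := by
  let x : Fin n := ⟨i, by omega⟩
  let y : Fin n := ⟨j + 1, by omega⟩
  let z : Fin n := ⟨l + 2, by omega⟩
  let H := Iic (⟨k + 2, by omega⟩ : Fin n) \ {x, y, z}
  have hHx : H.filter (· < x) = Iio x := by
    ext w; simp [H, x, y, z, Fin.lt_def, Fin.le_def, Fin.ext_iff]; omega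
  have hHy : H.filter (· < y) = (Iio y).erase x := by
    ext w; simp [H, x, y, z, Fin.lt_def, Fin.le_def, Fin.ext_iff]; omega
  have hHz : H.filter (· < z) = ((Iio z).erase x).erase y := by
    ext w; simp [H, x, y, z, Fin.lt_def, Fin.le_def, Fin.ext_iff]; omega
  refine ⟨H, ?_, x, y, z, Fin.lt_def.mpr (by simp [x, y]; omega),
    Fin.lt_def.mpr (by simp [y, z]; omega), by simp [H], by simp [H], by simp [H], ?_, ?_, ?_⟩
  · rw [card_sdiff_of_subset, Fin.card_Iic]
    · rw [card_insert_of_notMem, card_insert_of_notMem, card_singleton]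
      all_goals simp [x, y, z, Fin.ext_iff] <;> omega
    · intro w hw
      simp only [mem_insert, mem_singleton] at hw
      rcases hw with rfl | rfl | rfl <;> simp [x, y, z, Fin.le_def] <;> omega
  · rw [holesBelow, hHx, Fin.card_Iio]
  · rw [holesBelow, hHy, card_erase_of_mem (by simp [x, y, Fin.lt_def]; omega), Fin.card_Iio]
    simp [y]
  · rw [holesBelow, hHz, card_erase_of_mem (by simp [x, y, z, Fin.lt_def, Fin.ext_iff]; omega),
      card_erase_of_mem (by simp [x, z, Fin.lt_def]; omega), Fin.card_Iio]
    simp [z]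

theorem exists_forall_not_hasForcedOrder {n k : ℕ} {p : Fin (k + 2) → Fin (k + 2)}
    (hb : ¬IsBaxter p) (hn : k + 3 ≤ n) :
    ∃ H : Finset (Fin n), #H = k ∧ ∀ π, IsPPermH H π → ¬HasForcedOrder p H π := by
  have := mt isBaxter_of_forcedLT_trans hb
  simp only [not_forall] at this
  obtain ⟨i, j, l, hij, hjl, hl, hfail⟩ := this
  obtain ⟨H, hH, x, y, z, hxy, hyz, hx, hy, hz, rfl, rfl, rfl⟩ :=
    exists_holesBelow_eq_of_le hn hij hjl hl
  refine ⟨H, hH, fun π hπ hf => hfail ?_⟩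
  obtain ⟨u, hu⟩ := hπ.exists_eq_some hx
  obtain ⟨v, hv⟩ := hπ.exists_eq_some hy
  obtain ⟨w, hw⟩ := hπ.exists_eq_some hz
  rw [← hf x y u v hxy hu hv, ← hf y z v w hyz hv hw, ← hf x z u w (hxy.trans hyz) hu hw]
  exact ⟨lt_trans, fun h₁ h₂ => not_lt.mpr ((not_lt.mp h₂).trans (not_lt.mp h₁))⟩

theorem snH_eq_one_of_isBaxter {n k : ℕ} {p : Fin (k + 2) → Fin (k + 2)}
    (hp : Injective p) (hb : IsBaxter p) {H : Finset (Fin n)} (hH : #H = k) :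
    snH H p = 1 := by
  obtain ⟨π, hπ, hf⟩ := hb.exists_isPPermH_hasForcedOrder hp hH
  refine Nat.card_eq_one_iff_unique.mpr
    ⟨⟨fun π₁ π₂ => Subtype.ext ?_⟩, ⟨π, hπ, (ppAvoids_iff_hasForcedOrder hH hπ hp).mpr hf⟩⟩
  exact π₁.2.1.eq_of_hasForcedOrder π₂.2.1
    ((ppAvoids_iff_hasForcedOrder hH π₁.2.1 hp).mp π₁.2.2)
    ((ppAvoids_iff_hasForcedOrder hH π₂.2.1 hp).mp π₂.2.2)

theorem exists_snH_eq_zero_of_not_isBaxter {n k : ℕ} {p : Fin (k + 2) → Fin (k + 2)}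
    (hp : Injective p) (hb : ¬IsBaxter p) (hn : k + 3 ≤ n) :
    ∃ H : Finset (Fin n), #H = k ∧ snH H p = 0 := by
  obtain ⟨H, hH, hno⟩ := exists_forall_not_hasForcedOrder hb hn
  have : IsEmpty {π // IsPPermH H π ∧ PPAvoids π p} :=
    ⟨fun π => hno π.1 π.2.1 ((ppAvoids_iff_hasForcedOrder hH π.2.1 hp).mp π.2.2)⟩
  exact ⟨H, hH, Nat.card_of_isEmpty⟩

/-- A pattern `p` of length `k+2` is Baxter iff `s_n^H(p) = 1` for every
`n ≥ k` and every `k`-element hole set `H`; equivalently, this holds for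
`n = k+3`; equivalently, for some `n ≥ k+3`. -/
theorem baxter_characterization (k : ℕ) (p : Fin (k + 2) → Fin (k + 2))
    (hp : Function.Bijective p) :
    (IsBaxter p ↔
      ∀ n : ℕ, k ≤ n → ∀ H : Finset (Fin n), H.card = k → snH H p = 1) ∧
    (IsBaxter p ↔
      ∀ H : Finset (Fin (k + 3)), H.card = k → snH H p = 1) ∧
    (IsBaxter p ↔
      ∃ n : ℕ, k + 3 ≤ n ∧ ∀ H : Finset (Fin n), H.card = k → snH H p = 1) := by
  have of_baxter (hb : IsBaxter p) {n : ℕ} (H : Finset (Fin n)) (hH : H.card = k) :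
      snH H p = 1 :=
    snH_eq_one_of_isBaxter hp.injective hb hH
  have to_baxter {n : ℕ} (hn : k + 3 ≤ n) (h : ∀ H : Finset (Fin n), H.card = k → snH H p = 1) :
      IsBaxter p := by
    by_contra hb
    obtain ⟨H, hH, h₀⟩ := exists_snH_eq_zero_of_not_isBaxter hp.injective hb hn
    simp [h H hH] at h₀
  exact ⟨⟨fun hb _ _ => of_baxter hb, fun h => to_baxter le_rfl (h _ (by omega))⟩,
    ⟨fun hb => of_baxter hb, to_baxter le_rfl⟩,
    ⟨fun hb => ⟨k + 3, le_rfl, of_baxter hb⟩, fun ⟨_, hn, h⟩ => to_baxter hn h⟩⟩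
end

section
/- A partial permutation π = π₁⋯π_{j−1} ◊ π_{j+1}⋯π_n with a single hole at position j avoids the pattern 1234 if and only if: (1) the left part π₁⋯π_{j−1} avoids 123; (2) the elements of the left part smaller than the maximum of the right part form a decreasing sequence; (3) the right part π_{j+1}⋯π_n avoids 123; and (4) the elements of the right part larger than the minimum of the left part form a decreasing sequence. -/
open Finset

def extFun {n : ℕ} (π : Fin n → Option (Fin (n-1))) (t : Fin n) : Fin n → Fin n :=
  fun i => match π i with
  | none => t
  | some v => if (v:ℕ) < (t:ℕ) then ⟨(v:ℕ), by have := v.isLt; omega⟩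
      else ⟨(v:ℕ)+1, by have := v.isLt; omega⟩

lemma extFun_none {n : ℕ} {π : Fin n → Option (Fin (n-1))} {t i} (h : π i = none) :
    extFun π t i = t := by simp [extFun, h]

lemma extFun_some {n : ℕ} {π : Fin n → Option (Fin (n-1))} {t i v} (h : π i = some v) :
    ((extFun π t i : Fin n) : ℕ) = if (v:ℕ) < (t:ℕ) then (v:ℕ) else (v:ℕ)+1 := by
  simp only [extFun, h]; split_ifs <;> rfl

lemma extFun_inj {n : ℕ} {π : Fin n → Option (Fin (n-1))} {j : Fin n}
    (hhole : ∀ i, π i = none ↔ i = j)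
    (hval : ∀ v : Fin (n - 1), ∃! i : Fin n, π i = some v) (t : Fin n) :
    Function.Injective (extFun π t) := by
  intro a b hab
  have habv : ((extFun π t a : Fin n) : ℕ) = ((extFun π t b : Fin n) : ℕ) :=
    congrArg Fin.val hab
  cases ha : π a with
  | none =>
    cases hb : π b with
    | none => rw [(hhole a).mp ha, (hhole b).mp hb]
    | some v =>
      have h1 := congrArg Fin.val (extFun_none (t := t) ha)
      have h2 := extFun_some (t := t) hb
      exfalso; split_ifs at h2 <;> omega
  | some v =>
    cases hb : π b with
    | none =>
      have h1 := congrArg Fin.val (extFun_none (t := t) hb)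
      have h2 := extFun_some (t := t) ha
      exfalso; split_ifs at h2 <;> omega
    | some w =>
      have h1 := extFun_some (t := t) ha
      have h2 := extFun_some (t := t) hb
      have hvw : (v:ℕ) = (w:ℕ) := by split_ifs at h1 h2 <;> omega
      have : v = w := Fin.ext hvw
      subst this
      exact (hval v).unique ha hb

lemma extFun_lt_iff {n : ℕ} {π : Fin n → Option (Fin (n-1))} {t : Fin n}
    {i i' : Fin n} {vi vi' : Fin (n-1)} (hi : π i = some vi) (hi' : π i' = some vi') :
    (extFun π t i < extFun π t i' ↔ vi < vi') := by
  have h1 := extFun_some (t := t) hi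
  have h2 := extFun_some (t := t) hi'
  rw [Fin.lt_def, Fin.lt_def, h1, h2]
  split_ifs <;> omega

lemma containsPat_chain {n : ℕ} (σ : Fin n → Fin n) (x0 x1 x2 x3 : Fin n)
    (h01 : x0 < x1) (h12 : x1 < x2) (h23 : x2 < x3)
    (s01 : σ x0 < σ x1) (s12 : σ x1 < σ x2) (s23 : σ x2 < σ x3) :
    ContainsPat σ (id : Fin 4 → Fin 4) := by
  set x : Fin 4 → Fin n := ![x0, x1, x2, x3] with hxdef
  have hx : StrictMono x := by
    rw [Fin.strictMono_iff_lt_succ]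
    intro i
    fin_cases i <;> simpa [hxdef]
  have hsx : StrictMono (σ ∘ x) := by
    rw [Fin.strictMono_iff_lt_succ]
    intro i
    fin_cases i <;> simpa [hxdef]
  exact ⟨x, hx, fun a b => hsx.lt_iff_lt.trans Iff.rfl⟩

lemma extFun_lt_hole {n : ℕ} {π : Fin n → Option (Fin (n-1))} {j : Fin n}
    (hj : π j = none) {i : Fin n} {v : Fin (n-1)} (hi : π i = some v) {t : Fin n}
    (h : (v:ℕ) < (t:ℕ)) : extFun π t i < extFun π t j := by
  have h1 := extFun_some (t := t) hi
  have h2 := congrArg Fin.val (extFun_none (t := t) hj)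
  rw [Fin.lt_def, h1, h2]
  split_ifs <;> omega

lemma extFun_hole_lt {n : ℕ} {π : Fin n → Option (Fin (n-1))} {j : Fin n}
    (hj : π j = none) {i : Fin n} {v : Fin (n-1)} (hi : π i = some v) {t : Fin n}
    (h : (t:ℕ) ≤ (v:ℕ)) : extFun π t j < extFun π t i := by
  have h1 := extFun_some (t := t) hi
  have h2 := congrArg Fin.val (extFun_none (t := t) hj)
  rw [Fin.lt_def, h1, h2]
  split_ifs <;> omega

lemma ext_perm {n : ℕ} {π : Fin n → Option (Fin (n-1))} {j : Fin n}
    (hhole : ∀ i, π i = none ↔ i = j)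
    (hval : ∀ v : Fin (n - 1), ∃! i : Fin n, π i = some v) (t : Fin n) :
    ∃ σ : Equiv.Perm (Fin n), ⇑σ = extFun π t :=
  ⟨Equiv.ofBijective _ (Finite.injective_iff_bijective.mp (extFun_inj hhole hval t)), rfl⟩

/-- Structure of `1234`-avoiding partial permutations with one hole at
position `j`. -/
theorem avoid_1234_one_hole (n : ℕ) (j : Fin n)
    (π : Fin n → Option (Fin (n - 1)))
    (hhole : ∀ i, π i = none ↔ i = j)
    (hval : ∀ v : Fin (n - 1), ∃! i : Fin n, π i = some v) :
    PPAvoids π (id : Fin 4 → Fin 4) ↔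
      ((∀ a b c : Fin n, ∀ va vb vc : Fin (n - 1), a < b → b < c → c < j →
          π a = some va → π b = some vb → π c = some vc →
          ¬ (va < vb ∧ vb < vc)) ∧
       (∀ a b : Fin n, ∀ va vb : Fin (n - 1), a < b → b < j →
          π a = some va → π b = some vb →
          (∃ r : Fin n, ∃ vr, j < r ∧ π r = some vr ∧ va < vr) →
          (∃ r : Fin n, ∃ vr, j < r ∧ π r = some vr ∧ vb < vr) →
          vb < va) ∧
       (∀ a b c : Fin n, ∀ va vb vc : Fin (n - 1), j < a → a < b → b < c →
          π a = some va → π b = some vb → π c = some vc →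
          ¬ (va < vb ∧ vb < vc)) ∧
       (∀ a b : Fin n, ∀ va vb : Fin (n - 1), j < a → a < b →
          π a = some va → π b = some vb →
          (∃ l : Fin n, ∃ vl, l < j ∧ π l = some vl ∧ vl < va) →
          (∃ l : Fin n, ∃ vl, l < j ∧ π l = some vl ∧ vl < vb) →
          vb < va)) := by
  have hjnone : π j = none := (hhole j).mpr rfl
  have hn : 0 < n := j.pos
  constructor
  · intro hav
    refine ⟨?_, ?_, ?_, ?_⟩
    · -- condition 1
      rintro a b c va vb vc hab hbc hcj hpa hpb hpc ⟨h1, h2⟩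
      set t : Fin n := ⟨n-1, by omega⟩ with ht
      obtain ⟨σ, hσ⟩ := ext_perm hhole hval t
      have hext : IsExtension σ π := by
        intro i i' vi vi' hi hi'
        rw [hσ]; exact extFun_lt_iff hi hi'
      refine hav σ hext ?_
      rw [hσ]
      refine containsPat_chain _ a b c j hab hbc hcj ?_ ?_ ?_
      · exact (extFun_lt_iff hpa hpb).mpr h1
      · exact (extFun_lt_iff hpb hpc).mpr h2
      · exact extFun_lt_hole hjnone hpc (by have := vc.isLt; show (vc:ℕ) < n-1; omega)
    · -- condition 2
      intro a b va vb hab hbj hpa hpb _ hrb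
      by_contra hcon
      have hne : va ≠ vb := fun h => absurd ((hval va).unique hpa (h ▸ hpb)) (ne_of_lt hab)
      have hvab : va < vb := lt_of_le_of_ne (not_lt.mp hcon) hne
      obtain ⟨r, vr, hjr, hpr, hbr⟩ := hrb
      have hbrn : (vb:ℕ) < (vr:ℕ) := hbr
      have hvr := vr.isLt
      set t : Fin n := ⟨(vb:ℕ)+1, by omega⟩ with ht
      obtain ⟨σ, hσ⟩ := ext_perm hhole hval t
      have hext : IsExtension σ π := by
        intro i i' vi vi' hi hi'
        rw [hσ]; exact extFun_lt_iff hi hi'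
      refine hav σ hext ?_
      rw [hσ]
      refine containsPat_chain _ a b j r hab hbj hjr ?_ ?_ ?_
      · exact (extFun_lt_iff hpa hpb).mpr hvab
      · exact extFun_lt_hole hjnone hpb (by show (vb:ℕ) < (vb:ℕ)+1; omega)
      · exact extFun_hole_lt hjnone hpr (by show (vb:ℕ)+1 ≤ (vr:ℕ); omega)
    · -- condition 3
      rintro a b c va vb vc hja hab hbc hpa hpb hpc ⟨h1, h2⟩
      set t : Fin n := ⟨0, hn⟩ with ht
      obtain ⟨σ, hσ⟩ := ext_perm hhole hval t
      have hext : IsExtension σ π := by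
        intro i i' vi vi' hi hi'
        rw [hσ]; exact extFun_lt_iff hi hi'
      refine hav σ hext ?_
      rw [hσ]
      refine containsPat_chain _ j a b c hja hab hbc ?_ ?_ ?_
      · exact extFun_hole_lt hjnone hpa (by show (0:ℕ) ≤ (va:ℕ); omega)
      · exact (extFun_lt_iff hpa hpb).mpr h1
      · exact (extFun_lt_iff hpb hpc).mpr h2
    · -- condition 4
      intro a b va vb hja hab hpa hpb hla _
      by_contra hcon
      have hne : va ≠ vb := fun h => absurd ((hval va).unique hpa (h ▸ hpb)) (ne_of_lt hab)
      have hvab : va < vb := lt_of_le_of_ne (not_lt.mp hcon) hne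
      obtain ⟨l, vl, hlj, hpl, hla'⟩ := hla
      have hlan : (vl:ℕ) < (va:ℕ) := hla'
      have hva := va.isLt
      set t : Fin n := ⟨(vl:ℕ)+1, by omega⟩ with ht
      obtain ⟨σ, hσ⟩ := ext_perm hhole hval t
      have hext : IsExtension σ π := by
        intro i i' vi vi' hi hi'
        rw [hσ]; exact extFun_lt_iff hi hi'
      refine hav σ hext ?_
      rw [hσ]
      refine containsPat_chain _ l j a b hlj hja hab ?_ ?_ ?_
      · exact extFun_lt_hole hjnone hpl (by show (vl:ℕ) < (vl:ℕ)+1; omega)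
      · exact extFun_hole_lt hjnone hpa (by show (vl:ℕ)+1 ≤ (va:ℕ); omega)
      · exact (extFun_lt_iff hpa hpb).mpr hvab
  · rintro ⟨h1, h2, h3, h4⟩ σ hσ ⟨g, hg, hiff⟩
    have hv : ∀ i : Fin n, i ≠ j → ∃ v, π i = some v := by
      intro i hi
      cases h : π i with
      | none => exact absurd ((hhole i).mp h) hi
      | some v => exact ⟨v, rfl⟩
    have s01 : σ (g 0) < σ (g 1) := (hiff 0 1).mpr (by decide)
    have s02 : σ (g 0) < σ (g 2) := (hiff 0 2).mpr (by decide)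
    have s03 : σ (g 0) < σ (g 3) := (hiff 0 3).mpr (by decide)
    have s12 : σ (g 1) < σ (g 2) := (hiff 1 2).mpr (by decide)
    have s13 : σ (g 1) < σ (g 3) := (hiff 1 3).mpr (by decide)
    have s23 : σ (g 2) < σ (g 3) := (hiff 2 3).mpr (by decide)
    have g01 : g 0 < g 1 := hg (by decide)
    have g12 : g 1 < g 2 := hg (by decide)
    have g23 : g 2 < g 3 := hg (by decide)
    rcases lt_trichotomy (g 2) j with h | h | h
    · -- g0 < g1 < g2 < j : condition 1
      obtain ⟨v0, hv0⟩ := hv (g 0) (ne_of_lt (lt_trans (lt_trans g01 g12) h))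
      obtain ⟨v1, hv1⟩ := hv (g 1) (ne_of_lt (lt_trans g12 h))
      obtain ⟨v2, hv2⟩ := hv (g 2) (ne_of_lt h)
      exact h1 (g 0) (g 1) (g 2) v0 v1 v2 g01 g12 h hv0 hv1 hv2
        ⟨(hσ _ _ _ _ hv0 hv1).mp s01, (hσ _ _ _ _ hv1 hv2).mp s12⟩
    · -- g2 = j : condition 2 with r = g3
      obtain ⟨v0, hv0⟩ := hv (g 0) (ne_of_lt (h ▸ lt_trans g01 g12))
      obtain ⟨v1, hv1⟩ := hv (g 1) (ne_of_lt (h ▸ g12))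
      obtain ⟨v3, hv3⟩ := hv (g 3) (ne_of_gt (h ▸ g23))
      have hjg3 : j < g 3 := h ▸ g23
      have hv01 : v0 < v1 := (hσ _ _ _ _ hv0 hv1).mp s01
      have := h2 (g 0) (g 1) v0 v1 g01 (h ▸ g12) hv0 hv1
        ⟨g 3, v3, hjg3, hv3, (hσ _ _ _ _ hv0 hv3).mp s03⟩
        ⟨g 3, v3, hjg3, hv3, (hσ _ _ _ _ hv1 hv3).mp s13⟩
      exact absurd this (asymm hv01)
    · rcases lt_trichotomy (g 1) j with h' | h' | h'
      · -- g0 < g1 < j < g2 < g3 : condition 2 with r = g2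
        obtain ⟨v0, hv0⟩ := hv (g 0) (ne_of_lt (lt_trans g01 h'))
        obtain ⟨v1, hv1⟩ := hv (g 1) (ne_of_lt h')
        obtain ⟨v2, hv2⟩ := hv (g 2) (ne_of_gt h)
        have hv01 : v0 < v1 := (hσ _ _ _ _ hv0 hv1).mp s01
        have := h2 (g 0) (g 1) v0 v1 g01 h' hv0 hv1
          ⟨g 2, v2, h, hv2, (hσ _ _ _ _ hv0 hv2).mp s02⟩
          ⟨g 2, v2, h, hv2, (hσ _ _ _ _ hv1 hv2).mp s12⟩
        exact absurd this (asymm hv01)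
      · -- g1 = j : condition 4 with a = g2, b = g3, l = g0
        obtain ⟨v0, hv0⟩ := hv (g 0) (ne_of_lt (h' ▸ g01))
        obtain ⟨v2, hv2⟩ := hv (g 2) (ne_of_gt h)
        obtain ⟨v3, hv3⟩ := hv (g 3) (ne_of_gt (lt_trans h g23))
        have hv23 : v2 < v3 := (hσ _ _ _ _ hv2 hv3).mp s23
        have hg0j : g 0 < j := h' ▸ g01
        have := h4 (g 2) (g 3) v2 v3 h g23 hv2 hv3
          ⟨g 0, v0, hg0j, hv0, (hσ _ _ _ _ hv0 hv2).mp s02⟩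
          ⟨g 0, v0, hg0j, hv0, (hσ _ _ _ _ hv0 hv3).mp s03⟩
        exact absurd this (asymm hv23)
      · rcases lt_trichotomy (g 0) j with h'' | h'' | h''
        · -- g0 < j < g1 < g2 : condition 4 with a = g1, b = g2, l = g0
          obtain ⟨v0, hv0⟩ := hv (g 0) (ne_of_lt h'')
          obtain ⟨v1, hv1⟩ := hv (g 1) (ne_of_gt h')
          obtain ⟨v2, hv2⟩ := hv (g 2) (ne_of_gt h)
          have hv12 : v1 < v2 := (hσ _ _ _ _ hv1 hv2).mp s12
          have := h4 (g 1) (g 2) v1 v2 h' g12 hv1 hv2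
            ⟨g 0, v0, h'', hv0, (hσ _ _ _ _ hv0 hv1).mp s01⟩
            ⟨g 0, v0, h'', hv0, (hσ _ _ _ _ hv0 hv2).mp s02⟩
          exact absurd this (asymm hv12)
        · -- g0 = j : condition 3 with g1, g2, g3
          obtain ⟨v1, hv1⟩ := hv (g 1) (ne_of_gt h')
          obtain ⟨v2, hv2⟩ := hv (g 2) (ne_of_gt h)
          obtain ⟨v3, hv3⟩ := hv (g 3) (ne_of_gt (lt_trans h g23))
          exact h3 (g 1) (g 2) (g 3) v1 v2 v3 h' g12 g23 hv1 hv2 hv3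
            ⟨(hσ _ _ _ _ hv1 hv2).mp s12, (hσ _ _ _ _ hv2 hv3).mp s23⟩
        · -- j < g0 : condition 3 with g0, g1, g2
          obtain ⟨v0, hv0⟩ := hv (g 0) (ne_of_gt h'')
          obtain ⟨v1, hv1⟩ := hv (g 1) (ne_of_gt h')
          obtain ⟨v2, hv2⟩ := hv (g 2) (ne_of_gt h)
          exact h3 (g 0) (g 1) (g 2) v0 v1 v2 h'' g01 g12 hv0 hv1 hv2
            ⟨(hσ _ _ _ _ hv0 hv1).mp s01, (hσ _ _ _ _ hv1 hv2).mp s12⟩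
end
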